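/- arXiv:2011.15108 — 14 statements merged into one kernel-verified Lean document; each statement's English description precedes it below -/
import Mathlib

section
/- In any algebra of partial functions with relative complement and domain restriction, the equation (a ∩ b) ▷ a = a ∩ b holds, where a ∩ b denotes set intersection a - (a - b). (This uses functionality: the validity relies on a being a partial function, not an arbitrary relation.) -/
/-- Domain restriction of partial functions (as sets of pairs). -/
def restr {X Y : Type*} (f g : Set (X × Y)) : Set (X × Y) :=
  {p | (∃ y, (p.1, y) ∈ f) ∧ p ∈ g}

/-- `f` is a partial function from `X` to `Y`. -/
def IsPFun {X Y : Type*} (f : Set (X × Y)) : Prop :=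
  ∀ x y z, (x, y) ∈ f → (x, z) ∈ f → y = z

theorem stmt1 {X Y : Type*} (a b : Set (X × Y))
    (ha : IsPFun a) (hb : IsPFun b) :
    restr (a \ (a \ b)) a = a \ (a \ b) := by
  ext ⟨x, y⟩
  constructor
  · rintro ⟨⟨z, hz, hz2⟩, hxy⟩
    refine ⟨hxy, fun h => ?_⟩
    exact hz2 ⟨hz, (ha x z y hz hxy ▸ h.2)⟩
  · rintro ⟨hxy, h⟩
    exact ⟨⟨y, hxy, h⟩, hxy⟩
end

section
/- In an algebra A with binary operations - and ▷ satisfying the five axioms (Ax1)–(Ax5), the restriction operation is associative: a ▷ (b ▷ c) = (a ▷ b) ▷ c. -/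
theorem stmt2 {A : Type*} (sub rest : A → A → A)
    (ax1 : ∀ a b : A, sub a (sub b a) = a)
    (ax2 : ∀ a b : A, sub a (sub a b) = sub b (sub b a))
    (ax3 : ∀ a b c : A, sub (sub a b) c = sub (sub a c) b)
    (ax4 : ∀ a b c : A, sub (rest a c) (sub (rest a c) (rest b c)) = rest (rest a b) c)
    (ax5 : ∀ a b : A, rest (sub a (sub a b)) a = sub a (sub a b)) :
    ∀ a b c : A, rest a (rest b c) = rest (rest a b) c := by
  -- basic subtraction algebra facts
  have z1 : ∀ u : A, sub (sub u u) u = sub u u := by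
    intro u
    have h := ax1 (sub u u) u
    rwa [ax1 u u] at h
  have B : ∀ u w : A, sub (sub u u) (sub w u) = sub u u := by
    intro u w
    rw [ax3, ax1]
  have z2 : ∀ u w : A, sub (sub u u) w = sub u u := by
    intro u w
    calc sub (sub u u) w
        = sub (sub (sub u u) w)
            (sub (sub (sub u u) w) (sub (sub u u) w)) := (ax1 _ _).symm
      _ = sub (sub (sub u u) w)
            (sub (sub (sub u u) w) (sub (sub u w) u)) := by
            rw [← ax3 u u w]
      _ = sub (sub (sub u u) w)
            (sub (sub (sub u u) (sub (sub u w) u)) w) := by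
            rw [ax3 (sub u u) w (sub (sub u w) u)]
      _ = sub (sub (sub u u) w) (sub (sub u u) w) := by
            rw [B u (sub u w)]
      _ = sub (sub (sub u u) w) (sub (sub (sub u u) u) w) := by
            rw [z1 u]
      _ = sub (sub (sub u u) w) (sub (sub (sub u u) w) u) := by
            rw [ax3 (sub u u) u w]
      _ = sub u (sub u (sub (sub u u) w)) := ax2 _ _
      _ = sub u (sub u (sub (sub u w) u)) := by rw [← ax3 u u w]
      _ = sub u u := by rw [ax1 u (sub u w)]
  have zz : ∀ u w : A, sub u u = sub w w := by
    intro u w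
    have h := ax2 (sub u u) (sub w w)
    rwa [z2 u (sub w w), z2 w (sub u u), z2 u (sub u u), z2 w (sub w w)] at h
  have subzero : ∀ x u : A, sub x (sub u u) = x := by
    intro x u
    rw [zz u x]
    exact ax1 x x
  have absorb1 : ∀ x y : A,
      sub (sub x (sub x y)) (sub (sub x (sub x y)) y) = sub x (sub x y) := by
    intro x y
    rw [ax3 x (sub x y) y]
    exact subzero _ _
  have le_trans : ∀ u e c : A, sub u (sub u e) = u → sub e (sub e c) = e →
      sub u (sub u c) = u := by
    intro u e cc hu he
    have h1 : sub e (sub e u) = u := by rw [← ax2 u e]; exact hu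
    have h2 : sub e cc = sub (sub e cc) (sub e cc) := by
      conv_lhs => rw [← he]
      rw [ax3 e (sub e cc) cc]
    have h3 : sub u cc = sub (sub e cc) (sub e u) := by
      conv_lhs => rw [← h1]
      rw [ax3 e (sub e u) cc]
    rw [h3, h2, z2 (sub e cc) (sub e u)]
    exact subzero u (sub e cc)
  -- restriction lemmas
  have rxx : ∀ x : A, rest x x = x := by
    intro x
    have h := ax5 x x
    rwa [ax1 x x] at h
  have L3m : ∀ x y : A, sub (rest x y) (sub (rest x y) y) = rest x y := by
    intro x y
    have s2 : sub (rest x y) (sub (rest x y) y) = rest (rest x y) y := by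
      have h := ax4 x y y
      rwa [rxx y] at h
    have s4 : sub (rest x (rest x y)) (sub (rest x (rest x y)) (rest y (rest x y)))
        = rest x y := by
      have h := ax4 x y (rest x y)
      rwa [rxx (rest x y)] at h
    have s5 : sub (rest x y) (sub (rest x y) (rest y (rest x y))) = rest x y := by
      have h := absorb1 (rest x (rest x y)) (rest y (rest x y))
      rwa [s4] at h
    have s6 : rest (rest (rest x y) y) (rest x y) = rest x y := by
      have h := ax4 (rest x y) y (rest x y)
      rw [rxx (rest x y)] at h
      rw [s5] at h
      exact h.symm
    have h := ax5 (rest x y) y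
    rw [s2] at h
    rw [s6] at h
    exact s2.trans h.symm
  have L3r : ∀ x y : A, rest (rest x y) y = rest x y := by
    intro x y
    have s2 : sub (rest x y) (sub (rest x y) y) = rest (rest x y) y := by
      have h := ax4 x y y
      rwa [rxx y] at h
    exact s2.symm.trans (L3m x y)
  have R2' : ∀ u c : A, sub c (sub c u) = u → rest u c = u := by
    intro u cc h
    have h5 := ax5 cc u
    rwa [h] at h5
  have L6 : ∀ c e : A, sub c (sub c e) = e → rest c e = e := by
    intro cc e h
    have hec : rest e cc = e := R2' e cc h
    have h1 := ax4 e cc e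
    rw [rxx e, hec, rxx e] at h1
    have h2 := L3m cc e
    have h3 := ax2 e (rest cc e)
    rw [h1, h2] at h3
    exact h3.symm
  -- main proof
  intro a b c
  have hec_m : sub (rest b c) (sub (rest b c) c) = rest b c := L3m b c
  have hce : rest c (rest b c) = rest b c :=
    L6 c (rest b c) ((ax2 (rest b c) c).symm.trans hec_m)
  have hA := ax4 a c (rest b c)
  rw [hce, L3m a (rest b c)] at hA
  -- hA : rest a (rest b c) = rest (rest a c) (rest b c)
  have hB := ax4 (rest a c) (rest b c) c
  rw [L3r a c, L3r b c] at hB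
  -- hB : sub (rest a c) (sub (rest a c) (rest b c)) = rest (rest (rest a c) (rest b c)) c
  have hue : sub (rest (rest a c) (rest b c))
      (sub (rest (rest a c) (rest b c)) (rest b c)) = rest (rest a c) (rest b c) :=
    L3m (rest a c) (rest b c)
  have huc : sub (rest (rest a c) (rest b c))
      (sub (rest (rest a c) (rest b c)) c) = rest (rest a c) (rest b c) :=
    le_trans _ _ _ hue hec_m
  have hcu : sub c (sub c (rest (rest a c) (rest b c))) = rest (rest a c) (rest b c) :=
    (ax2 (rest (rest a c) (rest b c)) c).symm.trans huc
  have hru : rest (rest (rest a c) (rest b c)) c = rest (rest a c) (rest b c) :=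
    R2' _ _ hcu
  rw [hru] at hB
  -- hB : sub (rest a c) (sub (rest a c) (rest b c)) = rest (rest a c) (rest b c)
  exact hA.trans (hB.symm.trans (ax4 a b c))
end

section
/- In an algebra satisfying (Ax1)–(Ax5), with the induced semilattice order ≤ (a ≤ b iff a·b = a), one has b ▷ a ≤ a for all a, b. -/
/-- The induced semilattice order: `a ≤ b` iff `a·b = a` where `a·b := a - (a - b)`. -/
def sle {A : Type*} (sub : A → A → A) (a b : A) : Prop := sub a (sub a b) = a

/-- The domain-containment preorder: `a ≼ b` iff `b ▷ a = a`. -/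
def sprec {A : Type*} (rest : A → A → A) (a b : A) : Prop := rest b a = a

/-- The equivalence induced by `≼`. -/
def seqv {A : Type*} (rest : A → A → A) (a b : A) : Prop :=
  sprec rest a b ∧ sprec rest b a

theorem stmt3 {A : Type*} (sub rest : A → A → A)
    (ax1 : ∀ a b : A, sub a (sub b a) = a)
    (ax2 : ∀ a b : A, sub a (sub a b) = sub b (sub b a))
    (ax3 : ∀ a b c : A, sub (sub a b) c = sub (sub a c) b)
    (ax4 : ∀ a b c : A, sub (rest a c) (sub (rest a c) (rest b c)) = rest (rest a b) c)
    (ax5 : ∀ a b : A, rest (sub a (sub a b)) a = sub a (sub a b)) :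
    ∀ a b : A, sle sub (rest b a) a := by
  intro a b
  -- idempotence of the meet
  have idem : ∀ x : A, sub x (sub x x) = x := fun x => ax1 x x
  -- x ▷ x = x
  have rxx : ∀ x : A, rest x x = x := by
    intro x
    have h := ax5 x x
    rwa [idem x] at h
  -- E4 : x - (x - (x - y)) = x - y
  have e4 : ∀ x y : A, sub x (sub x (sub x y)) = sub x y := by
    intro x y
    calc sub x (sub x (sub x y)) = sub (sub x y) (sub (sub x y) x) := ax2 x (sub x y)
      _ = sub (sub x (sub (sub x y) x)) y := ax3 x y (sub (sub x y) x)
      _ = sub x y := by rw [ax1 x (sub x y)]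
  -- E5 : (x·y)·x = x·y
  have e5 : ∀ x y : A, sub (sub x (sub x y)) (sub (sub x (sub x y)) x) = sub x (sub x y) := by
    intro x y
    calc sub (sub x (sub x y)) (sub (sub x (sub x y)) x)
        = sub x (sub x (sub x (sub x y))) := (ax2 x (sub x (sub x y))).symm
      _ = sub x (sub x y) := e4 x (sub x y)
  -- E5' : (x·y)·y = x·y
  have e5' : ∀ x y : A, sub (sub x (sub x y)) (sub (sub x (sub x y)) y) = sub x (sub x y) := by
    intro x y
    rw [ax2 x y]
    exact e5 y x
  set u := rest b a with hu
  -- key : (b▷u)·(a▷u) = u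
  have key : sub (rest b u) (sub (rest b u) (rest a u)) = u := by
    have h := ax4 b a u
    rwa [rxx u] at h
  -- h3 : u·(a▷u) = u
  have h3 : sub u (sub u (rest a u)) = u := by
    have h := e5' (rest b u) (rest a u)
    rwa [key] at h
  -- h4 : u·(a▷u) = (u▷a)▷u
  have h4 : sub u (sub u (rest a u)) = rest (rest u a) u := by
    have h := ax4 u a u
    rwa [rxx u] at h
  -- e2 : u·a = u▷a
  have e2 : sub u (sub u a) = rest u a := by
    have h := ax4 b a a
    rwa [rxx a] at h
  -- conclude
  show sub u (sub u a) = u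
  calc sub u (sub u a) = rest (sub u (sub u a)) u := (ax5 u a).symm
    _ = rest (rest u a) u := by rw [e2]
    _ = sub u (sub u (rest a u)) := h4.symm
    _ = u := h3
end

section
/- Let (S, ·) be a meet-semilattice with bottom 0 such that for every a ∈ S, the downset a↓ = {b : b ≤ a} with meet ·, bottom 0, top a, and a complement operation is a Boolean algebra. Define a - b := the complement of a·b in a↓. Then (S, -) is a subtraction algebra, i.e., satisfies: a - (b - a) = a; a - (a - b) = b - (b - a); and (a - b) - c = (a - c) - b; moreover a - (a - b) = a·b. -/
private lemma ba_sup_rel {α : Type*} [BooleanAlgebra α] {x d : α} (h : x ≤ d) :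
    x ⊔ d ⊓ xᶜ = d := by
  rw [sup_inf_left, sup_compl_eq_top, inf_top_eq]
  exact sup_eq_right.mpr h

private lemma ba_inf_compl {α : Type*} [BooleanAlgebra α] (x y : α) :
    x ⊓ (x ⊓ y)ᶜ = x ⊓ yᶜ := by
  rw [compl_inf, inf_sup_left, inf_compl_eq_bot, bot_sup_eq]

private lemma downFacts {A : Type*} [SemilatticeInf A] [OrderBot A] (compl : A → A → A) (a : A)
    (h : ∃ B : BooleanAlgebra {b : A // b ≤ a},
      (∀ x y : {b : A // b ≤ a}, (B.inf x y).1 = x.1 ⊓ y.1) ∧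
      (B.bot.1 = (⊥ : A)) ∧ (B.top.1 = a) ∧
      (∀ x : {b : A // b ≤ a}, (B.compl x).1 = compl a x.1)) :
    (∀ x : A, x ≤ a → compl a x ≤ a) ∧
    (∀ x : A, x ≤ a → x ⊓ compl a x = ⊥) ∧
    (∀ x : A, x ≤ a → compl a (compl a x) = x) ∧
    (compl a ⊥ = a) ∧
    (∀ x y : A, x ≤ a → y ≤ a → x ⊓ compl a (x ⊓ y) = x ⊓ compl a y) ∧
    (∀ x d z : A, x ≤ d → d ≤ a → z ≤ a → x ≤ z → d ⊓ compl a x ≤ z → d ≤ z) ∧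
    (∀ x y : A, x ≤ a → y ≤ a → x ⊓ y = ⊥ →
      (∀ z, z ≤ a → x ≤ z → y ≤ z → a ≤ z) → compl a x = y) := by
  obtain ⟨B, hinf, hbot, htop, hcompl⟩ := h
  letI := B
  have hinf' : ∀ x y : {b : A // b ≤ a}, (x ⊓ y).1 = x.1 ⊓ y.1 := hinf
  have hcompl' : ∀ x : {b : A // b ≤ a}, (xᶜ).1 = compl a x.1 := hcompl
  have hbot' : ((⊥ : {b : A // b ≤ a})).1 = ⊥ := hbot
  have htop' : ((⊤ : {b : A // b ≤ a})).1 = a := htop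
  have e1 : ∀ X Y : {b : A // b ≤ a}, B.le X Y ↔ X ⊓ Y = X := fun X Y => inf_eq_left.symm
  have le_iff : ∀ X Y : {b : A // b ≤ a}, B.le X Y ↔ X.1 ≤ Y.1 := by
    intro X Y
    rw [e1, Subtype.ext_iff, hinf', inf_eq_left]
  refine ⟨?_, ?_, ?_, ?_, ?_, ?_, ?_⟩
  · -- F1 : compl a x ≤ a
    intro x hx
    have h := ((⟨x, hx⟩ : {b : A // b ≤ a})ᶜ).2
    rwa [hcompl'] at h
  · -- F2 : x ⊓ compl a x = ⊥
    intro x hx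
    have h0 : (⟨x, hx⟩ : {b : A // b ≤ a}) ⊓ (⟨x, hx⟩ : {b : A // b ≤ a})ᶜ = ⊥ :=
      inf_compl_eq_bot
    have h := congrArg Subtype.val h0
    rwa [hinf', hcompl', hbot'] at h
  · -- F3 : compl a (compl a x) = x
    intro x hx
    have h0 : ((⟨x, hx⟩ : {b : A // b ≤ a})ᶜ)ᶜ = ⟨x, hx⟩ := compl_compl _
    have h := congrArg Subtype.val h0
    rwa [hcompl', hcompl'] at h
  · -- F4 : compl a ⊥ = a
    have h0 : ((⊥ : {b : A // b ≤ a}))ᶜ = ⊤ := compl_bot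
    have h := congrArg Subtype.val h0
    rwa [hcompl', hbot', htop'] at h
  · -- F5 : x ⊓ compl a (x ⊓ y) = x ⊓ compl a y
    intro x y hx hy
    have h0 := ba_inf_compl (⟨x, hx⟩ : {b : A // b ≤ a}) ⟨y, hy⟩
    have h := congrArg Subtype.val h0
    simp only [hinf', hcompl'] at h
    exact h
  · -- F6 : sup bound fact
    intro x d z hxd hda hza hxz hdz
    have key : (⟨x, hxd.trans hda⟩ : {b : A // b ≤ a}) ⊔
        (⟨d, hda⟩ : {b : A // b ≤ a}) ⊓ (⟨x, hxd.trans hda⟩ : {b : A // b ≤ a})ᶜ = ⟨d, hda⟩ := by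
      have hXD : B.le ⟨x, hxd.trans hda⟩ ⟨d, hda⟩ := (le_iff _ _).mpr hxd
      exact ba_sup_rel hXD
    have h1 : B.le ⟨x, hxd.trans hda⟩ ⟨z, hza⟩ := (le_iff _ _).mpr hxz
    have h2 : B.le ((⟨d, hda⟩ : {b : A // b ≤ a}) ⊓ (⟨x, hxd.trans hda⟩ : {b : A // b ≤ a})ᶜ)
        ⟨z, hza⟩ := by
      refine (le_iff _ _).mpr ?_
      rw [hinf', hcompl']
      exact hdz
    have h3 : B.le ((⟨x, hxd.trans hda⟩ : {b : A // b ≤ a}) ⊔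
        (⟨d, hda⟩ : {b : A // b ≤ a}) ⊓ (⟨x, hxd.trans hda⟩ : {b : A // b ≤ a})ᶜ) ⟨z, hza⟩ :=
      sup_le h1 h2
    rw [key] at h3
    exact (le_iff _ _).mp h3
  · -- F7 : uniqueness of complements
    intro x y hx hy hxy hz
    have hXY : (⟨x, hx⟩ : {b : A // b ≤ a}) ⊓ ⟨y, hy⟩ = ⊥ := by
      refine Subtype.ext ?_
      rw [hinf', hbot']
      exact hxy
    have hsup : (⟨x, hx⟩ : {b : A // b ≤ a}) ⊔ ⟨y, hy⟩ = ⊤ := by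
      have t1 : B.le ⟨x, hx⟩ ((⟨x, hx⟩ : {b : A // b ≤ a}) ⊔ ⟨y, hy⟩) := le_sup_left
      have t2 : B.le ⟨y, hy⟩ ((⟨x, hx⟩ : {b : A // b ≤ a}) ⊔ ⟨y, hy⟩) := le_sup_right
      have t3 : a ≤ ((⟨x, hx⟩ : {b : A // b ≤ a}) ⊔ ⟨y, hy⟩).1 :=
        hz _ ((⟨x, hx⟩ : {b : A // b ≤ a}) ⊔ ⟨y, hy⟩).2 ((le_iff _ _).mp t1) ((le_iff _ _).mp t2)
      have t4 : ((⟨x, hx⟩ : {b : A // b ≤ a}) ⊔ ⟨y, hy⟩).1 = a :=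
        le_antisymm ((⟨x, hx⟩ : {b : A // b ≤ a}) ⊔ ⟨y, hy⟩).2 t3
      refine Subtype.ext ?_
      rw [htop']
      exact t4
    have h0 : (⟨x, hx⟩ : {b : A // b ≤ a})ᶜ = ⟨y, hy⟩ := compl_unique hXY hsup
    have h := congrArg Subtype.val h0
    rwa [hcompl'] at h

/-- The subtraction defined from the downset-complement operation: `a - b := (a·b)ᶜ` in `a↓`. -/
def subOf {A : Type*} [SemilatticeInf A] (compl : A → A → A) (a b : A) : A :=
  compl a (a ⊓ b)

theorem stmt7 {A : Type*} [SemilatticeInf A] [OrderBot A] (compl : A → A → A)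
    (hBA : ∀ a : A, ∃ B : BooleanAlgebra {b : A // b ≤ a},
      (∀ x y : {b : A // b ≤ a}, (B.inf x y).1 = x.1 ⊓ y.1) ∧
      (B.bot.1 = (⊥ : A)) ∧ (B.top.1 = a) ∧
      (∀ x : {b : A // b ≤ a}, (B.compl x).1 = compl a x.1)) :
    (∀ a b : A, subOf compl a (subOf compl b a) = a) ∧
    (∀ a b : A, subOf compl a (subOf compl a b) = subOf compl b (subOf compl b a)) ∧
    (∀ a b c : A, subOf compl (subOf compl a b) c = subOf compl (subOf compl a c) b) ∧
    (∀ a b : A, subOf compl a (subOf compl a b) = a ⊓ b) := by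
  have F := fun a => downFacts compl a (hBA a)
  have part4 : ∀ a b : A, subOf compl a (subOf compl a b) = a ⊓ b := by
    intro a b
    obtain ⟨F1, F2, F3, F4, F5, F6, F7⟩ := F a
    show compl a (a ⊓ compl a (a ⊓ b)) = a ⊓ b
    rw [inf_eq_right.mpr (F1 _ inf_le_left), F3 _ inf_le_left]
  have part1 : ∀ a b : A, subOf compl a (subOf compl b a) = a := by
    intro a b
    obtain ⟨Fa1, Fa2, Fa3, Fa4, Fa5, Fa6, Fa7⟩ := F a
    obtain ⟨Fb1, Fb2, Fb3, Fb4, Fb5, Fb6, Fb7⟩ := F b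
    show compl a (a ⊓ compl b (b ⊓ a)) = a
    have hc : compl b (b ⊓ a) ≤ b := Fb1 _ inf_le_left
    have h2 : (b ⊓ a) ⊓ compl b (b ⊓ a) = ⊥ := Fb2 _ inf_le_left
    have hbotp : a ⊓ compl b (b ⊓ a) = ⊥ :=
      le_bot_iff.mp (le_of_le_of_eq
        (le_inf (le_inf (le_trans inf_le_right hc) inf_le_left) inf_le_right) h2)
    rw [hbotp, Fa4]
  have part3 : ∀ a b c : A,
      subOf compl (subOf compl a b) c = subOf compl (subOf compl a c) b := by
    intro a b c
    obtain ⟨Fa1, Fa2, Fa3, Fa4, Fa5, Fa6, Fa7⟩ := F a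
    have key : ∀ u v : A,
        subOf compl (subOf compl a u) v = compl a (a ⊓ u) ⊓ compl a (a ⊓ v) := by
      intro u v
      show compl (compl a (a ⊓ u)) (compl a (a ⊓ u) ⊓ v) = _
      set d := compl a (a ⊓ u) with hdef
      have hda : d ≤ a := Fa1 _ inf_le_left
      obtain ⟨Fd1, Fd2, Fd3, Fd4, Fd5, Fd6, Fd7⟩ := F d
      have hx : d ⊓ v ≤ d := inf_le_left
      have hdisj : (d ⊓ v) ⊓ (d ⊓ compl a (d ⊓ v)) = ⊥ := by
        have h1 : (d ⊓ v) ⊓ (d ⊓ compl a (d ⊓ v)) = (d ⊓ v) ⊓ compl a (d ⊓ v) := by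
          rw [← inf_assoc, inf_eq_left.mpr hx]
        rw [h1]
        exact Fa2 _ (le_trans hx hda)
      have hcod : ∀ z, z ≤ d → d ⊓ v ≤ z → d ⊓ compl a (d ⊓ v) ≤ z → d ≤ z :=
        fun z hzd h1 h2 => Fa6 (d ⊓ v) d z hx hda (hzd.trans hda) h1 h2
      have hrel : compl d (d ⊓ v) = d ⊓ compl a (d ⊓ v) :=
        Fd7 (d ⊓ v) (d ⊓ compl a (d ⊓ v)) hx inf_le_left hdisj hcod
      have hdc : d ⊓ v = d ⊓ (a ⊓ v) := by
        rw [← inf_assoc, inf_eq_left.mpr hda]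
      rw [hrel, hdc, Fa5 d (a ⊓ v) hda inf_le_left]
    rw [key b c, key c b, inf_comm]
  exact ⟨part1, fun a b => by rw [part4, part4, inf_comm], part3, part4⟩
end

section
/- In an algebra satisfying (Ax1)–(Ax5), define a ≼ b iff a ≤ b ▷ a (equivalently a = b ▷ a). Then ≼ is a preorder containing ≤, and a ≼ 0 implies a = 0. -/
theorem stmt8 {A : Type*} (sub rest : A → A → A)
    (ax1 : ∀ a b : A, sub a (sub b a) = a)
    (ax2 : ∀ a b : A, sub a (sub a b) = sub b (sub b a))
    (ax3 : ∀ a b c : A, sub (sub a b) c = sub (sub a c) b)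
    (ax4 : ∀ a b c : A, sub (rest a c) (sub (rest a c) (rest b c)) = rest (rest a b) c)
    (ax5 : ∀ a b : A, rest (sub a (sub a b)) a = sub a (sub a b)) :
    (∀ a : A, sprec rest a a) ∧
    (∀ a b c : A, sprec rest a b → sprec rest b c → sprec rest a c) ∧
    (∀ a b : A, sle sub a b → sprec rest a b) ∧
    (∀ a b : A, sprec rest a (sub b b) → a = sub b b) := by
  -- reflexivity of ▷ : rest a a = a
  have hrefl : ∀ a : A, rest a a = a := fun a => by
    have h := ax5 a a
    rwa [ax1 a a] at h
  -- P : (y·b)·y = y·b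
  have P : ∀ y b : A,
      sub (sub y (sub y b)) (sub (sub y (sub y b)) y) = sub y (sub y b) := fun y b => by
    have h4 := ax4 (sub y (sub y b)) y y
    rw [ax5 y b, ax5 y b, hrefl y] at h4
    exact h4
  -- key : if (rest c a)·a = a then rest c a = a
  have key : ∀ a c : A,
      sub (rest c a) (sub (rest c a) a) = a → rest c a = a := fun a c h => by
    have h5 := ax5 (rest c a) a
    rw [h] at h5
    -- h5 : rest a (rest c a) = a
    have h4 := ax4 c a (rest c a)
    rw [h5, hrefl (rest c a)] at h4
    -- h4 : X·a = rest c a  with X := rest c (rest c a)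
    have hm : sub (rest c a) (sub (rest c a) a) = rest c a := by
      rw [← h4, ax2 (rest c (rest c a)) a]
      exact P a (rest c (rest c a))
    exact hm.symm.trans h
  refine ⟨fun a => hrefl a, ?_, ?_, ?_⟩
  · -- transitivity
    intro a b c hab hbc
    have hab' : rest b a = a := hab
    have hbc' : rest c b = b := hbc
    show rest c a = a
    have h4 := ax4 c b a
    rw [hab', hbc', hab'] at h4
    exact key a c h4
  · -- sle → sprec
    intro a b h
    have h' : sub a (sub a b) = a := h
    have hba : sub b (sub b a) = a := by rw [← ax2 a b]; exact h'
    have h5 := ax5 b a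
    rw [hba] at h5
    -- h5 : rest a b = a
    show rest b a = a
    have h4 := ax4 a b a
    rw [h5, hrefl a] at h4
    -- h4 : sub a (sub a (rest b a)) = a
    rw [ax2 a (rest b a)] at h4
    exact key a b h4
  · -- a ≼ 0 → a = 0
    intro a b h
    have h' : rest (sub b b) a = a := h
    have C : sub a (sub a (sub b b)) = sub b b := by
      rw [ax2 a (sub b b), ax3 b b a, ax3 b b (sub (sub b a) b), ax1 b (sub b a)]
    have h5 := ax5 a (sub b b)
    rw [C] at h5
    -- h5 : rest (sub b b) a = sub b b
    exact h'.symm.trans h5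
end

section
/- In an algebra satisfying (Ax1)–(Ax5), let ∼ be the equivalence generated by the preorder ≼ (a ≼ b iff a = b ▷ a). Then the quotient poset A/∼ is a meet-semilattice with [a] ∧ [b] = [a ▷ b], and moreover the image of the downset a↓ under the quotient map equals the downset of [a] in A/∼. -/
theorem stmt9 {A : Type*} (sub rest : A → A → A)
    (ax1 : ∀ a b : A, sub a (sub b a) = a)
    (ax2 : ∀ a b : A, sub a (sub a b) = sub b (sub b a))
    (ax3 : ∀ a b c : A, sub (sub a b) c = sub (sub a c) b)
    (ax4 : ∀ a b c : A, sub (rest a c) (sub (rest a c) (rest b c)) = rest (rest a b) c)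
    (ax5 : ∀ a b : A, rest (sub a (sub a b)) a = sub a (sub a b)) :
    (∀ a b : A, sprec rest (rest a b) a) ∧
    (∀ a b : A, sprec rest (rest a b) b) ∧
    (∀ a b c : A, sprec rest c a → sprec rest c b → sprec rest c (rest a b)) ∧
    (∀ a b : A, sprec rest b a ↔ ∃ c, sle sub c a ∧ seqv rest c b) := by
  -- abbreviation for the meet
  set m : A → A → A := fun x y => sub x (sub x y) with hm
  have hmdef : ∀ x y, m x y = sub x (sub x y) := fun _ _ => rfl
  have comm : ∀ x y, m x y = m y x := fun x y => ax2 x y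
  have idem : ∀ x, m x x = x := fun x => ax1 x x
  have ax4' : ∀ a b c, m (rest a c) (rest b c) = rest (rest a b) c := fun a b c => ax4 a b c
  have ax5' : ∀ x y, rest (m x y) x = m x y := fun x y => ax5 x y
  have rxx : ∀ x, rest x x = x := by
    intro x
    have h := ax5' x x
    rwa [idem x] at h
  have ax5c : ∀ x y, rest (m x y) y = m x y := by
    intro x y
    have h := ax5' y x
    rwa [← comm x y] at h
  have absorb : ∀ x y, m (m x y) y = m x y := by
    intro x y
    have h := ax4' (m x y) y y
    rwa [rxx y, ax5c x y, ax5c x y] at h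
  have absorb2 : ∀ x y, m (m x y) x = m x y := by
    intro x y
    have h := ax4' (m x y) x x
    rwa [rxx x, ax5' x y, ax5' x y] at h
  have E2 : ∀ a b, m (rest a b) b = rest (rest a b) b := by
    intro a b
    have h := ax4' a b b
    rwa [rxx b] at h
  have Gbang : ∀ a b, m (rest a (rest a b)) (rest b (rest a b)) = rest a b := by
    intro a b
    have h := ax4' a b (rest a b)
    rwa [rxx (rest a b)] at h
  have J1 : ∀ a b, m (rest a b) (rest b (rest a b)) = m (rest a b) b := by
    intro a b
    have h := ax4' (rest a b) b (rest a b)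
    rw [rxx (rest a b)] at h
    -- h : m (rest a b) (rest b (rest a b)) = rest (rest (rest a b) b) (rest a b)
    rw [← E2 a b] at h
    -- h : ... = rest (m (rest a b) b) (rest a b)
    rwa [ax5' (rest a b) b] at h
  have Rle : ∀ a b, m (rest a b) b = rest a b := by
    intro a b
    have h1 := Gbang a b
    have h2 : m (rest a b) (rest b (rest a b)) = rest a b := by
      calc m (rest a b) (rest b (rest a b))
          = m (m (rest a (rest a b)) (rest b (rest a b))) (rest b (rest a b)) := by rw [h1]
        _ = m (rest a (rest a b)) (rest b (rest a b)) := absorb _ _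
        _ = rest a b := h1
    rw [← J1 a b]
    exact h2
  have G1 : ∀ a b, rest a (rest a b) = rest a b := by
    intro a b
    have h1 := Gbang a b
    have h2 : m (rest a b) (rest a (rest a b)) = rest a b := by
      calc m (rest a b) (rest a (rest a b))
          = m (m (rest a (rest a b)) (rest b (rest a b))) (rest a (rest a b)) := by rw [h1]
        _ = m (rest a (rest a b)) (rest b (rest a b)) := absorb2 _ _
        _ = rest a b := h1
    have h3 : m (rest a (rest a b)) (rest a b) = rest a (rest a b) := Rle a (rest a b)
    rw [comm] at h3
    rw [h2] at h3
    exact h3.symm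
  have G2 : ∀ a b, rest b (rest a b) = rest a b := by
    intro a b
    have h1 := Gbang a b
    have h2 : m (rest a b) (rest b (rest a b)) = rest a b := by
      calc m (rest a b) (rest b (rest a b))
          = m (m (rest a (rest a b)) (rest b (rest a b))) (rest b (rest a b)) := by rw [h1]
        _ = m (rest a (rest a b)) (rest b (rest a b)) := absorb _ _
        _ = rest a b := h1
    have h3 : m (rest b (rest a b)) (rest a b) = rest b (rest a b) := Rle b (rest a b)
    rw [comm] at h3
    rw [h2] at h3
    exact h3.symm
  have K : ∀ x y, rest x (m x y) = m x y := by
    intro x y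
    have h := ax4' (m x y) x (m x y)
    rw [rxx (m x y), ax5' x y] at h
    -- h : m (m x y) (rest x (m x y)) = rest (m x y) (m x y)
    rw [rxx (m x y)] at h
    -- h : m (m x y) (rest x (m x y)) = m x y
    have h2 : m (rest x (m x y)) (m x y) = rest x (m x y) := Rle x (m x y)
    rw [comm] at h2
    rw [h] at h2
    exact h2.symm
  refine ⟨fun a b => G1 a b, fun a b => G2 a b, ?_, ?_⟩
  · intro a b c h1 h2
    have h := ax4' a b c
    unfold sprec at h1 h2 ⊢
    rw [h1, h2, idem c] at h
    exact h.symm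
  · intro a b
    constructor
    · intro h
      unfold sprec at h
      refine ⟨rest b a, Rle b a, G1 b a, ?_⟩
      have h4 := ax4' b a b
      unfold sprec
      rw [rxx b, h, idem b] at h4
      exact h4.symm
    · rintro ⟨c, hsle, hcb, hbc⟩
      unfold sle at hsle
      unfold sprec at hcb hbc ⊢
      -- hsle : m c a = c, hcb : rest b c = c, hbc : rest c b = b
      have hac : rest a c = c := by
        have h1 : m a c = c := by rw [comm]; exact hsle
        have h2 := K a c
        rwa [h1] at h2
      have h := ax4' a c b
      rw [hbc, hac, hbc] at h
      -- h : m (rest a b) b = b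
      have h2 := Rle a b
      exact h2.symm.trans h
end

section
/- In an algebra satisfying (Ax1)–(Ax5), the relations ≤ and ≼ coincide on each downset a↓: if x, y ≤ a and x ≼ y then x ≤ y. Consequently, for every [b] ≼ [a], the element b ▷ a is the unique element of a↓ that is ∼-equivalent to b. -/
theorem stmt10 {A : Type*} (sub rest : A → A → A)
    (ax1 : ∀ a b : A, sub a (sub b a) = a)
    (ax2 : ∀ a b : A, sub a (sub a b) = sub b (sub b a))
    (ax3 : ∀ a b c : A, sub (sub a b) c = sub (sub a c) b)
    (ax4 : ∀ a b c : A, sub (rest a c) (sub (rest a c) (rest b c)) = rest (rest a b) c)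
    (ax5 : ∀ a b : A, rest (sub a (sub a b)) a = sub a (sub a b)) :
    (∀ a x y : A, sle sub x a → sle sub y a → sprec rest x y → sle sub x y) ∧
    (∀ a b : A, sprec rest b a →
      (sle sub (rest b a) a ∧ seqv rest (rest b a) b ∧
        ∀ c, sle sub c a → seqv rest c b → c = rest b a)) := by
  have idem : ∀ x : A, sub x (sub x x) = x := fun x => ax1 x x
  have le_rest : ∀ x a : A, sub x (sub x a) = x → rest x a = x := by
    intro x a hxa
    have h5 := ax5 a x
    rw [ax2 a x, hxa] at h5
    exact h5
  have rest_self : ∀ x : A, rest x x = x := fun x => le_rest x x (idem x)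
  have part1 : ∀ a x y : A, sle sub x a → sle sub y a → sprec rest x y → sle sub x y := by
    intro a x y hx hy hxy
    have hx' : sub x (sub x a) = x := hx
    have hy' : sub y (sub y a) = y := hy
    have hxy' : rest y x = x := hxy
    have h4 := ax4 y x a
    rw [le_rest y a hy', hxy', le_rest x a hx'] at h4
    -- h4 : sub y (sub y x) = x
    show sub x (sub x y) = x
    rw [ax2 x y]
    exact h4
  refine ⟨part1, ?_⟩
  intro a b hba
  have h : rest a b = b := hba
  have s2 : sle sub (rest b a) a := by
    have h4 := ax4 a b a
    rw [rest_self a, h] at h4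
    -- h4 : sub a (sub a (rest b a)) = rest b a
    show sub (rest b a) (sub (rest b a) a) = rest b a
    rw [ax2 (rest b a) a]
    exact h4
  have s3 : rest (rest b a) b = b := by
    have h4 := ax4 b a b
    rw [rest_self b, h, idem b] at h4
    exact h4.symm
  have s4 : rest b (rest b a) = rest b a := by
    have e1 := ax4 a b (rest b a)
    have e2 := ax4 b a (rest b a)
    rw [h] at e1
    rw [rest_self (rest b a)] at e2
    rw [← e1, ax2 (rest a (rest b a)), e2]
  refine ⟨s2, ⟨s4, s3⟩, ?_⟩
  intro c hc hcb
  obtain ⟨hbc, hcb'⟩ := hcb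
  have hbc' : rest b c = c := hbc
  have hcb'' : rest c b = b := hcb'
  have hc' : sub c (sub c a) = c := hc
  have u1 : rest c a = c := le_rest c a hc'
  have u2 : sub c (sub c (rest b a)) = rest b a := by
    have e := ax4 c b a
    rw [u1, hcb''] at e
    exact e
  have u3 : sub (rest a c) (sub (rest a c) c) = c := by
    have e := ax4 a b c
    rw [h, hbc'] at e
    exact e
  have u4 : c = rest (rest b a) c := by
    have e2 := ax4 b a c
    rw [hbc', ax2 c (rest a c), u3] at e2
    exact e2
  have u5 := part1 a c (rest b a) hc s2 u4.symm
  have u5' : sub c (sub c (rest b a)) = c := u5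
  rw [u2] at u5'
  exact u5'.symm
end

section
/- In an algebra satisfying (Ax1)–(Ax5), the quotient A/∼ carries a subtraction algebra structure with [a] - [b] = [a - (b ▷ a)]: i.e., this operation is well defined on ∼-classes and satisfies the subtraction algebra axioms (Ax1)–(Ax3), with induced meet [a] ∧ [b] = [a ▷ b]. -/
structure SubAlgPkg (A : Type*) where
  sub : A → A → A
  rest : A → A → A
  ax1 : ∀ a b : A, sub a (sub b a) = a
  ax2 : ∀ a b : A, sub a (sub a b) = sub b (sub b a)
  ax3 : ∀ a b c : A, sub (sub a b) c = sub (sub a c) b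
  ax4 : ∀ a b c : A, sub (rest a c) (sub (rest a c) (rest b c)) = rest (rest a b) c
  ax5 : ∀ a b : A, rest (sub a (sub a b)) a = sub a (sub a b)

namespace SubAlgPkg

variable {A : Type*} (S : SubAlgPkg A)

/-- meet -/
def m (a b : A) : A := S.sub a (S.sub a b)

lemma m_def (a b : A) : S.m a b = S.sub a (S.sub a b) := rfl

lemma ax2m (a b : A) : S.m a b = S.m b a := S.ax2 a b

lemma ax4m (a b c : A) : S.m (S.rest a c) (S.rest b c) = S.rest (S.rest a b) c := S.ax4 a b c

lemma ax5m (a b : A) : S.rest (S.m a b) a = S.m a b := S.ax5 a b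

lemma mxx (x : A) : S.m x x = x := S.ax1 x x

/-- SS1 : m x (sub x y) = sub x y -/
lemma SS1 (x y : A) : S.sub x (S.sub x (S.sub x y)) = S.sub x y := by
  calc S.sub x (S.sub x (S.sub x y))
      = S.sub (S.sub x y) (S.sub (S.sub x y) x) := S.ax2 x (S.sub x y)
    _ = S.sub (S.sub x (S.sub (S.sub x y) x)) y := S.ax3 x y (S.sub (S.sub x y) x)
    _ = S.sub x y := by rw [S.ax1 x (S.sub x y)]

lemma SS1m (x y : A) : S.m x (S.sub x y) = S.sub x y := S.SS1 x y

/-- B2 -/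
lemma B2 (x y : A) : S.sub (S.sub x y) y = S.sub x y := by
  have h : S.sub y (S.sub x y) = y := S.ax1 y x
  calc S.sub (S.sub x y) y = S.sub (S.sub x y) (S.sub y (S.sub x y)) := by rw [h]
    _ = S.sub x y := S.ax1 (S.sub x y) y

/-- M6 : m x (m x y) = m x y -/
lemma M6 (x y : A) : S.m x (S.m x y) = S.m x y := by
  show S.sub x (S.sub x (S.sub x (S.sub x y))) = _
  calc S.sub x (S.sub x (S.sub x (S.sub x y)))
      = S.sub (S.sub x (S.sub x y)) (S.sub (S.sub x (S.sub x y)) x) :=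
        S.ax2 x (S.sub x (S.sub x y))
    _ = S.sub (S.sub x (S.sub (S.sub x (S.sub x y)) x)) (S.sub x y) :=
        S.ax3 x (S.sub x y) (S.sub (S.sub x (S.sub x y)) x)
    _ = S.sub x (S.sub x y) := by rw [S.ax1 x (S.sub x (S.sub x y))]

lemma B3 (x y : A) : S.m (S.m x y) x = S.m x y := by
  rw [← S.ax2m, S.M6]

lemma B3b (x y : A) : S.m (S.m x y) y = S.m x y := by
  rw [show S.m x y = S.m y x from S.ax2m x y, S.B3]

lemma M7 (x y : A) : S.m x (S.m y x) = S.m y x := by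
  rw [S.ax2m, S.B3b]

/-- helper for associativity: sub (m y x) z = sub (m y x) (m y z) -/
lemma MHs (x y z : A) : S.sub (S.m y x) z = S.sub (S.m y x) (S.m y z) := by
  show S.sub (S.sub y (S.sub y x)) z = S.sub (S.sub y (S.sub y x)) (S.sub y (S.sub y z))
  calc S.sub (S.sub y (S.sub y x)) z
      = S.sub (S.sub y z) (S.sub y x) := S.ax3 y (S.sub y x) z
    _ = S.sub (S.sub y (S.sub y (S.sub y z))) (S.sub y x) := by rw [S.SS1]
    _ = S.sub (S.sub y (S.sub y x)) (S.sub y (S.sub y z)) :=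
        S.ax3 y (S.sub y (S.sub y z)) (S.sub y x)

lemma MH (x y z : A) : S.m (S.m y x) z = S.m (S.m y x) (S.m y z) :=
  congrArg (S.sub (S.m y x)) (S.MHs x y z)

lemma MASSOC (x y z : A) : S.m (S.m x y) z = S.m x (S.m y z) := by
  calc S.m (S.m x y) z = S.m (S.m y x) z := by rw [S.ax2m x y]
    _ = S.m (S.m y x) (S.m y z) := S.MH x y z
    _ = S.m (S.m y z) (S.m y x) := S.ax2m _ _
    _ = S.m (S.m y z) x := (S.MH z y x).symm
    _ = S.m x (S.m y z) := S.ax2m _ _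

lemma GLBM {p q c : A} (h1 : S.m p c = c) (h2 : S.m q c = c) : S.m (S.m p q) c = c := by
  rw [S.MASSOC, h2, h1]

lemma TRANS {b w c : A} (h1 : S.m w c = c) (h2 : S.m b w = w) : S.m b c = c := by
  rw [← h1, ← S.MASSOC, h2, h1]

/-- all "zeros" coincide -/
lemma Z0 (x y : A) : S.sub x x = S.sub y y := by
  set u := S.sub x y with hu
  have hd3 : S.sub (S.sub x x) y = S.sub u x := (S.ax3 x y x).symm
  set d := S.sub u x with hdd
  have hsxd : S.sub x d = x := S.ax1 x u
  have hmxd : S.m x d = S.sub x x := by rw [m_def, hsxd]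
  have hsdx : S.sub d x = d := by rw [hdd]; exact S.B2 u x
  have hmdx : S.m d x = S.sub d d := by rw [m_def, hsdx]
  have hv : S.sub d d = S.sub x x := by rw [← hmdx, ← hmxd, S.ax2m]
  have hsdy : S.sub d y = d := by
    rw [hdd, hu]; rw [show S.sub (S.sub x y) x = S.sub (S.sub x x) y from (S.ax3 x x y).symm]
    exact S.B2 (S.sub x x) y
  have hsyd : S.sub y d = y := by
    conv_lhs => rw [← hsdy]
    exact S.ax1 y d
  have hmyd : S.m y d = S.sub y y := by rw [m_def, hsyd]
  have hmdy : S.m d y = S.sub d d := by rw [m_def, hsdy]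
  rw [← hv, ← hmdy, S.ax2m, hmyd]

lemma Za (t x : A) : S.sub t (S.sub x x) = t := by
  rw [S.Z0 x t]; exact S.ax1 t t

lemma Zb (x y : A) : S.sub (S.sub x x) y = S.sub x x := by
  have h1 : S.m (S.sub x x) (S.sub (S.sub x x) y) = S.sub (S.sub x x) y :=
    S.SS1m (S.sub x x) y
  have h2 : S.m (S.sub x x) y = S.sub x x := by
    rw [S.ax2m, m_def, S.Za y x]; exact S.Z0 y x
  have h3 : S.m (S.sub x x) (S.sub (S.sub x x) y) = S.sub x x := by
    rw [m_def]
    show S.sub (S.sub x x) (S.m (S.sub x x) y) = S.sub x x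
    rw [h2]; exact S.Za _ x
  rw [← h1, h3]

lemma Zm1 (x t : A) : S.m x (S.sub t t) = S.sub t t := by
  rw [m_def, S.Za x t, S.Z0 x t]

lemma Zm2 (x t : A) : S.m (S.sub t t) x = S.sub t t := by
  rw [S.ax2m]; exact S.Zm1 x t

lemma LEQ2 {x y : A} (h : S.m x y = x) : S.sub x y = S.sub x x := by
  conv_lhs => rw [← h]
  rw [m_def, S.ax3 x (S.sub x y) y]
  exact S.Z0 _ x

lemma LEQ1 {x y : A} {t : A} (h : S.sub x y = S.sub t t) : S.m x y = x := by
  rw [m_def, h, S.Za x t]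

lemma DISJ (x y : A) : S.m y (S.sub x y) = S.sub y y := by
  rw [m_def, S.ax1 y x]

/-- CORE (relative complement): c ≤ y and c ⊓ z = 0 imply c ≤ y - z -/
lemma CORE {y z c t : A} (h1 : S.m y c = c) (h2 : S.m z c = S.sub t t) :
    S.m (S.sub y z) c = c := by
  set z' := S.m y z with hz'
  have hz'z : S.m z z' = z' := by rw [hz']; exact S.M7 z y
  have hcz' : S.m c (S.m z' c) = S.m z' c := S.M7 c z'
  have hz'c : S.m z' (S.m z' c) = S.m z' c := S.M6 z' c
  have hzc' : S.m z (S.m z' c) = S.m z' c := S.TRANS hz'c hz'z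
  have hc0 : S.m z' c = S.sub t t := by
    have := S.GLBM hzc' hcz'
    rw [h2] at this
    rw [← this, S.Zm2]
  -- T' := sub c (sub y z) equals sub z' (sub y c) and is 0
  have hcy : c = S.sub y (S.sub y c) := by rw [← m_def, h1]
  have hyz : S.sub y z = S.sub y z' := by
    rw [hz', m_def]; exact (S.SS1 y z).symm
  have hT : S.sub c (S.sub y z) = S.sub z' (S.sub y c) := by
    rw [hyz]
    conv_lhs => rw [hcy]
    rw [S.ax3 y (S.sub y c) (S.sub y z')]
    congr 1
    show S.m y z' = z'
    rw [hz']; exact S.M6 y z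
  have hT1 : S.m c (S.sub c (S.sub y z)) = S.sub c (S.sub y z) := S.SS1m c _
  have hT2 : S.m z' (S.sub c (S.sub y z)) = S.sub c (S.sub y z) := by
    rw [hT]; exact S.SS1m z' _
  have hT0 : S.sub c (S.sub y z) = S.sub t t := by
    have := S.GLBM hT2 hT1
    rw [hc0] at this
    rw [← this, S.Zm2]
  rw [S.ax2m, m_def, hT0, S.Za c t]

lemma C1 (x : A) : S.rest x x = x := by
  have := S.ax5m x x
  rwa [S.mxx] at this

lemma E10 (x y z : A) : S.rest (S.rest x y) z = S.rest (S.rest y x) z := by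
  rw [← S.ax4m x y z, S.ax2m, S.ax4m y x z]

lemma E6 {b b' : A} (h1 : S.rest b' b = b) (h2 : S.rest b b' = b') (z : A) :
    S.rest b z = S.rest b' z := by
  calc S.rest b z = S.rest (S.rest b' b) z := by rw [h1]
    _ = S.m (S.rest b' z) (S.rest b z) := (S.ax4m b' b z).symm
    _ = S.m (S.rest b z) (S.rest b' z) := S.ax2m _ _
    _ = S.rest (S.rest b b') z := S.ax4m b b' z
    _ = S.rest b' z := by rw [h2]

lemma GEN {u x : A} (h : S.rest u x = u) : S.rest x u = u := by
  have exp : ∀ z, S.rest u z = S.m (S.rest u z) (S.rest x z) := by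
    intro z
    conv_lhs => rw [← h]
    rw [← S.ax4m u x z]
  set t := S.rest x u with ht
  have h1 : S.m u t = u := by
    have := exp u; rw [S.C1] at this; exact this.symm
  have h2 : S.m t u = u := by rw [S.ax2m]; exact h1
  have h3 : S.rest u t = u := by
    have := S.ax5m t u; rwa [h2] at this
  have exp2 : ∀ z, S.rest t z = S.m (S.rest x z) (S.rest u z) := by
    intro z
    rw [ht, ← S.ax4m x u z]
  have h4 : t = S.m (S.rest x t) u := by
    have := exp2 t; rwa [S.C1, h3] at this
  have h5 : S.m t u = t := by
    conv_lhs => rw [h4]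
    rw [S.B3b, ← h4]
  rw [ht] at h5 ⊢
  rw [← h5, h2]

lemma LEr1 {x w : A} (h : S.m x w = w) : S.rest w x = w := by
  have := S.ax5m x w; rwa [h] at this

lemma LEr2 {x w : A} (h : S.m x w = w) : S.rest x w = w := S.GEN (S.LEr1 h)

lemma XIgen (x y : A) : S.rest (S.rest x y) y = S.m (S.rest x y) y := by
  rw [← S.ax4m x y y, S.C1]

lemma C2b (x y : A) : S.rest y (S.rest x y) = S.rest x y := by
  set v := S.rest x y with hv
  set t := S.rest y v with htt
  have s1 : S.m (S.rest x v) t = v := by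
    rw [htt, hv, S.ax4m x y (S.rest x y), S.C1]
  have s2 : S.m t v = v := by
    conv_lhs => rw [← s1]
    rw [S.M7]
    exact s1
  have s3 : S.rest v t = v := by
    have := S.ax5m t v; rwa [s2] at this
  have s4 : S.rest t v = v := S.GEN s3
  have s5 : t = S.m (S.rest y t) v := by
    have := S.ax4m y v t
    rw [s3, ← htt, S.C1] at this
    exact this.symm
  have s6 : S.m t v = t := by
    conv_lhs => rw [s5]
    rw [S.B3b, ← s5]
  rw [htt] at s6 s2 ⊢
  rw [← s6, s2]

lemma C2 (x y : A) : S.rest x (S.rest x y) = S.rest x y := by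
  set v := S.rest x y with hv
  set T := S.rest x v with hT
  have hyv : S.rest y v = v := by rw [hv]; exact S.C2b x y
  have s1 : S.m T v = v := by
    have := S.ax4m x y v
    rw [hyv, ← hv, S.C1, ← hT] at this
    exact this
  have s2 : S.rest v T = v := by
    have := S.ax5m T v; rwa [s1] at this
  have s3 : S.rest T v = v := S.GEN s2
  have s4 : T = S.m (S.rest x T) v := by
    have := S.ax4m x v T
    rw [s2, ← hT, S.C1] at this
    exact this.symm
  have s5 : S.m T v = T := by
    conv_lhs => rw [s4]
    rw [S.B3b, ← s4]
  rw [hT] at s5 ⊢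
  rw [← s5, s1]

lemma RQ (x y : A) : S.m (S.rest x y) y = S.rest x y := by
  set v := S.rest x y with hv
  have hyv : S.rest y v = v := by rw [hv]; exact S.C2b x y
  have hXI : S.rest v y = S.m v y := by rw [hv]; exact S.XIgen x y
  have h2 : S.rest (S.rest v y) v = v := by
    have := S.ax4m v y v
    rw [S.C1, hyv, S.mxx] at this
    exact this.symm
  rw [hXI, S.ax5m v y] at h2
  exact h2

lemma RQ2 (x y : A) : S.m y (S.rest x y) = S.rest x y := by
  rw [S.ax2m]; exact S.RQ x y

lemma TRP {a b c : A} (h1 : S.rest b a = a) (h2 : S.rest c b = b) : S.rest c a = a := by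
  have key : S.m (S.rest c a) a = a := by
    calc S.m (S.rest c a) a = S.m (S.rest c a) (S.rest b a) := by rw [h1]
      _ = S.rest (S.rest c b) a := S.ax4m c b a
      _ = S.rest b a := by rw [h2]
      _ = a := h1
  have := S.RQ c a
  rw [key] at this
  exact this.symm

lemma GLB2 {Aa Bb z : A} (hz : S.rest z Bb = z) (ha : S.rest Aa z = z) :
    S.m (S.rest Aa Bb) z = z := by
  conv_lhs => rw [← hz]
  rw [S.ax4m Aa z Bb, ha, hz]

lemma KLOW (x y : A) : S.m (S.rest x y) (S.m x y) = S.m x y := by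
  have hk : S.rest (S.m x y) y = S.m x y := by
    have := S.ax5m y x
    rwa [← S.ax2m x y] at this
  have hx : S.rest x (S.m x y) = S.m x y := S.LEr2 (S.M6 x y)
  have := S.ax4m x (S.m x y) y
  rwa [hx, hk] at this

lemma KLOW0 {x y t : A} (h : S.rest x y = S.sub t t) : S.m x y = S.sub t t := by
  have := S.KLOW x y
  rw [h, S.Zm2] at this
  exact this.symm

lemma E3 (x y : A) : S.rest (S.rest x y) (S.rest y x) = S.rest y x := by
  set u := S.rest y x with hu
  have h1 : S.m (S.rest y u) (S.rest x u) = u := by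
    have := S.ax4m y x u
    rw [← hu, S.C1] at this
    exact this
  have h2 := S.ax4m x y u
  rw [S.ax2m, h1] at h2
  exact h2.symm

lemma zeroR (x t : A) : S.rest (S.sub t t) x = S.sub t t := by
  have := S.ax5m x (S.sub t t)
  rwa [S.Zm1] at this

lemma Zr (x t : A) : S.rest x (S.sub t t) = S.sub t t := S.GEN (S.zeroR x t)

lemma C4 (x y z : A) : S.rest (S.rest x y) z = S.rest x (S.rest y z) := by
  set N := S.rest y z with hN
  set R := S.rest x N with hR
  set L := S.m (S.rest x z) N with hL
  have hRN : S.m N R = R := by rw [S.ax2m, hR]; exact S.RQ x N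
  have hzN : S.m z N = N := by rw [hN]; exact S.RQ2 y z
  have hzR : S.m z R = R := S.TRANS hRN hzN
  have hRz : S.rest R z = R := S.LEr1 hzR
  have hxR : S.rest x R = R := by rw [hR]; exact S.C2 x N
  have g1 : S.m (S.rest x z) R = R := S.GLB2 hRz hxR
  have hL1 : S.m L R = R := by rw [hL, S.MASSOC, hRN, g1]
  have hLx : S.m (S.rest x z) L = L := by rw [hL]; exact S.M6 _ _
  have hLN : S.m N L = L := by rw [hL]; exact S.M7 N (S.rest x z)
  have hLz : S.m z L = L := S.TRANS hLN hzN
  have hLrxz : S.rest (S.rest x z) L = L := S.LEr2 hLx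
  have hxL : S.rest x L = L := S.TRP hLrxz (S.C2 x z)
  have hLN' : S.rest L N = L := S.LEr1 hLN
  have g2 : S.m (S.rest x N) L = L := S.GLB2 hLN' hxL
  rw [← hR] at g2
  have hLR : L = R := by rw [← hL1, S.ax2m, g2]
  calc S.rest (S.rest x y) z = S.m (S.rest x z) (S.rest y z) := (S.ax4m x y z).symm
    _ = L := by rw [hL, hN]
    _ = R := hLR
    _ = S.rest x (S.rest y z) := by rw [hR, hN]

lemma C3 (x y z : A) : S.rest x (S.rest y z) = S.rest y (S.rest x z) := by
  rw [← S.C4, S.E10, S.C4]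

/-- Z5q : rest x (sub y (rest x y)) = 0 -/
lemma Z5q (x y t : A) : S.rest x (S.sub y (S.rest x y)) = S.sub t t := by
  set u := S.rest x y with hu
  set w := S.sub y u with hw
  set p := S.rest x w with hp
  have hyw : S.m y w = w := by rw [hw]; exact S.SS1m y u
  have hpw : S.m w p = p := by rw [hp]; exact S.RQ2 x w
  have hyp : S.m y p = p := S.TRANS hpw hyw
  have hpy : S.rest p y = p := S.LEr1 hyp
  have hxp : S.rest x p = p := by rw [hp]; exact S.C2 x w
  have g1 : S.m u p = p := by rw [hu]; exact S.GLB2 hpy hxp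
  have g2 : S.m w p = p := hpw
  have g3 : S.m (S.m u w) p = p := S.GLBM g1 g2
  have hduw : S.m u w = S.sub u u := by rw [hw]; exact S.DISJ y u
  rw [hduw, S.Zm2] at g3
  rw [← g3, S.Z0 u t]

/-- E1 strong : sub a (rest (sub b (rest a b)) a) = a -/
lemma E1s (a b : A) : S.sub a (S.rest (S.sub b (S.rest a b)) a) = a := by
  set w := S.sub b (S.rest a b) with hwdef
  have h0 : S.rest a w = S.sub a a := by rw [hwdef]; exact S.Z5q a b a
  have hE3 : S.rest (S.rest a w) (S.rest w a) = S.rest w a := S.E3 a w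
  rw [h0, S.zeroR] at hE3
  rw [← hE3, S.Za a a]

/-- E2 strong : sub a (rest (sub a (rest b a)) a) = rest b a -/
lemma E2s (a b : A) : S.sub a (S.rest (S.sub a (S.rest b a)) a) = S.rest b a := by
  set v := S.rest b a with hv
  have h1 : S.m a (S.sub a v) = S.sub a v := S.SS1m a v
  have h2 : S.rest (S.sub a v) a = S.sub a v := S.LEr1 h1
  rw [h2]
  show S.m a v = v
  rw [S.ax2m, hv]
  exact S.RQ b a

/-- CHARP : u ≤ x, z ≼ x, rest u z = 0  ⟹  rest (sub x u) z = z -/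
lemma CHARP {x u z t : A} (hu : S.m x u = u) (hz : S.rest x z = z)
    (h0 : S.rest u z = S.sub t t) : S.rest (S.sub x u) z = z := by
  set u' := S.sub x u with hu'
  set phi := S.rest u' z with hphi
  have hphiz : S.m z phi = phi := by rw [hphi]; exact S.RQ2 u' z
  set e := S.sub z phi with he
  have hze : S.m z e = e := by rw [he]; exact S.SS1m z phi
  have hrze : S.rest z e = e := S.LEr2 hze
  have hxe : S.rest x e = e := S.TRP hrze hz
  have hue : S.rest u e = S.sub t t := by
    have : S.rest (S.rest u z) e = S.rest u (S.rest z e) := S.C4 u z e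
    rw [h0, hrze, S.zeroR] at this
    exact this.symm
  -- phi' := rest u' e = 0
  have hphie : S.m e (S.rest u' e) = S.rest u' e := by rw [S.ax2m]; exact S.RQ u' e
  have hp'z : S.rest (S.rest u' e) z = S.rest u' e :=
    S.LEr1 (S.TRANS hphie hze)
  have hp'u' : S.rest u' (S.rest u' e) = S.rest u' e := S.C2 u' e
  have hp'phi : S.m phi (S.rest u' e) = S.rest u' e := by
    rw [hphi]; exact S.GLB2 hp'z hp'u'
  have hdphe : S.m phi e = S.sub phi phi := by rw [he]; exact S.DISJ z phi
  have hp'0 : S.rest u' e = S.sub t t := by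
    have := S.GLBM hp'phi hphie
    rw [hdphe, S.Zm2] at this
    rw [← this, S.Z0 phi t]
  -- xi := rest e x
  set xi := S.rest e x with hxi
  have hxie : S.rest xi e = e := by
    have := S.E3 e x
    rw [hxe] at this
    rw [hxi]
    exact this
  have heu : S.rest e u = S.sub t t := by
    have := S.E3 u e
    rw [hue, S.zeroR] at this
    exact this.symm
  have heu' : S.rest e u' = S.sub t t := by
    have := S.E3 u' e
    rw [hp'0, S.zeroR] at this
    exact this.symm
  have hxiu : S.rest xi u = S.sub t t := by
    rw [hxi, S.C4, S.LEr2 hu, heu]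
  have hxiu' : S.rest xi u' = S.sub t t := by
    have hu'x : S.m x u' = u' := by rw [hu']; exact S.SS1m x u
    rw [hxi, S.C4, S.LEr2 hu'x, heu']
  have hmxiu : S.m xi u = S.sub t t := S.KLOW0 hxiu
  have hmxiu' : S.m xi u' = S.sub t t := S.KLOW0 hxiu'
  have hxix : S.m x xi = xi := by rw [S.ax2m, hxi]; exact S.RQ e x
  have hcore : S.m (S.sub x u) xi = xi := by
    have h2' : S.m u xi = S.sub t t := by rw [S.ax2m]; exact hmxiu
    exact S.CORE hxix h2'
  have hcore' : S.m u' xi = xi := by rw [hu']; exact hcore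
  have hxi0 : xi = S.sub t t := by
    have h' : S.m xi u' = S.m u' xi := S.ax2m xi u'
    rw [hmxiu', hcore'] at h'
    exact h'.symm
  have he0 : e = S.sub t t := by
    rw [← hxie, hxi0, S.zeroR]
  have he' : S.sub z phi = S.sub t t := by rw [← he]; exact he0
  have hzphi : S.m z phi = z := S.LEQ1 he'
  have hfin : phi = z := by rw [← hphiz]; exact hzphi
  exact hfin

lemma SPM (p w : A) : S.sub p (S.m p w) = S.sub p w := S.SS1 p w

/-- first-argument/second-argument well-definedness core -/
lemma WD1 {a a' b b' : A} (ha : S.rest a' a = a) (hb : S.rest b b' = b') :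
    S.rest (S.sub a' (S.rest b' a')) (S.sub a (S.rest b a)) = S.sub a (S.rest b a) := by
  set Z := S.sub a (S.rest b a) with hZ
  have hZa : S.m a Z = Z := by rw [hZ]; exact S.SS1m a _
  have hZpa : S.rest a Z = Z := S.LEr2 hZa
  have hZpa' : S.rest a' Z = Z := S.TRP hZpa ha
  have hbZ : S.rest b Z = S.sub Z Z := by rw [hZ]; exact S.Z5q b a Z
  have hb'Z : S.rest b' Z = S.sub Z Z := by
    calc S.rest b' Z = S.rest (S.rest b b') Z := by rw [hb]
      _ = S.rest (S.rest b' b) Z := S.E10 b b' Z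
      _ = S.rest b' (S.rest b Z) := S.C4 b' b Z
      _ = S.sub Z Z := by rw [hbZ, S.Zr]
  have hv'Z : S.rest (S.rest b' a') Z = S.sub Z Z := by
    calc S.rest (S.rest b' a') Z = S.rest b' (S.rest a' Z) := S.C4 b' a' Z
      _ = S.sub Z Z := by rw [hZpa', hb'Z]
  exact S.CHARP (S.RQ2 b' a') hZpa' hv'Z

/-- restriction of a "q"-term simplifies -/
lemma QK (a b c : A) :
    S.rest c (S.sub a (S.rest b a)) = S.m (S.sub a (S.rest b a)) (S.rest c a) := by
  set Q := S.sub a (S.rest b a) with hQ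
  set Ac := S.rest c a with hAc
  set X := S.m Q Ac with hX
  set Y := S.rest c Q with hY
  have haQ : S.m a Q = Q := by rw [hQ]; exact S.SS1m a _
  have hQY : S.m Q Y = Y := by rw [hY]; exact S.RQ2 c Q
  have haY : S.m a Y = Y := S.TRANS hQY haQ
  have g2 : S.m Ac Y = Y := by
    rw [hAc]
    exact S.GLB2 (S.LEr1 haY) (by rw [hY]; exact S.C2 c Q)
  have hXY : S.m X Y = Y := by rw [hX]; exact S.GLBM hQY g2
  have hXQ : S.m Q X = X := by
    rw [hX, S.ax2m]
    exact S.B3 Q Ac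
  have hXAc : S.m Ac X = X := by
    rw [hX, S.ax2m]
    exact S.B3b Q Ac
  have hcX : S.rest c X = X := S.TRP (S.LEr2 hXAc) (by rw [hAc]; exact S.C2 c a)
  have hYX : S.m Y X = X := by
    rw [hY]
    exact S.GLB2 (S.LEr1 hXQ) hcX
  have hXY' : X = Y := by
    rw [← hYX, S.ax2m, hXY]
  rw [← hXY']

lemma E4s (a b c : A) :
    S.sub (S.sub a (S.rest b a)) (S.rest c (S.sub a (S.rest b a))) =
    S.sub (S.sub a (S.rest c a)) (S.rest b (S.sub a (S.rest c a))) := by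
  rw [S.QK a b c, S.QK a c b, S.SPM, S.SPM]
  exact S.ax3 a (S.rest b a) (S.rest c a)

end SubAlgPkg

/-- The subtraction on the quotient: `[a] - [b] = [a - (b ▷ a)]`. -/
def qsub {A : Type*} (sub rest : A → A → A) (a b : A) : A := sub a (rest b a)

theorem stmt12 {A : Type*} (sub rest : A → A → A)
    (ax1 : ∀ a b : A, sub a (sub b a) = a)
    (ax2 : ∀ a b : A, sub a (sub a b) = sub b (sub b a))
    (ax3 : ∀ a b c : A, sub (sub a b) c = sub (sub a c) b)
    (ax4 : ∀ a b c : A, sub (rest a c) (sub (rest a c) (rest b c)) = rest (rest a b) c)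
    (ax5 : ∀ a b : A, rest (sub a (sub a b)) a = sub a (sub a b)) :
    (∀ a a' b b' : A, seqv rest a a' → seqv rest b b' →
      seqv rest (qsub sub rest a b) (qsub sub rest a' b')) ∧
    (∀ a b : A, seqv rest (qsub sub rest a (qsub sub rest b a)) a) ∧
    (∀ a b : A, seqv rest (qsub sub rest a (qsub sub rest a b)) (qsub sub rest b (qsub sub rest b a))) ∧
    (∀ a b c : A, seqv rest (qsub sub rest (qsub sub rest a b) c) (qsub sub rest (qsub sub rest a c) b)) ∧
    (∀ a b : A, seqv rest (qsub sub rest a (qsub sub rest a b)) (rest a b)) := by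
  set S : SubAlgPkg A := ⟨sub, rest, ax1, ax2, ax3, ax4, ax5⟩ with hS
  have hsub : sub = S.sub := rfl
  have hrest : rest = S.rest := rfl
  refine ⟨?_, ?_, ?_, ?_, ?_⟩
  · -- well-definedness
    rintro a a' b b' ⟨ha1, ha2⟩ ⟨hb1, hb2⟩
    constructor
    · show S.rest (S.sub a' (S.rest b' a')) (S.sub a (S.rest b a)) = S.sub a (S.rest b a)
      exact S.WD1 ha1 hb2
    · show S.rest (S.sub a (S.rest b a)) (S.sub a' (S.rest b' a')) = S.sub a' (S.rest b' a')
      exact S.WD1 ha2 hb1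
  · -- G1
    intro a b
    have h := S.E1s a b
    constructor
    · show S.rest a (S.sub a (S.rest (S.sub b (S.rest a b)) a)) = S.sub a (S.rest (S.sub b (S.rest a b)) a)
      rw [h]; exact S.C1 a
    · show S.rest (S.sub a (S.rest (S.sub b (S.rest a b)) a)) a = a
      rw [h]; exact S.C1 a
  · -- G2
    intro a b
    have h1 := S.E2s a b
    have h2 := S.E2s b a
    constructor
    · show S.rest (S.sub b (S.rest (S.sub b (S.rest a b)) b)) (S.sub a (S.rest (S.sub a (S.rest b a)) a)) = S.sub a (S.rest (S.sub a (S.rest b a)) a)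
      rw [h1, h2]; exact S.E3 a b
    · show S.rest (S.sub a (S.rest (S.sub a (S.rest b a)) a)) (S.sub b (S.rest (S.sub b (S.rest a b)) b)) = S.sub b (S.rest (S.sub b (S.rest a b)) b)
      rw [h1, h2]; exact S.E3 b a
  · -- G3
    intro a b c
    have h := S.E4s a b c
    constructor
    · show S.rest (S.sub (S.sub a (S.rest c a)) (S.rest b (S.sub a (S.rest c a)))) (S.sub (S.sub a (S.rest b a)) (S.rest c (S.sub a (S.rest b a)))) = S.sub (S.sub a (S.rest b a)) (S.rest c (S.sub a (S.rest b a)))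
      rw [h]; exact S.C1 _
    · show S.rest (S.sub (S.sub a (S.rest b a)) (S.rest c (S.sub a (S.rest b a)))) (S.sub (S.sub a (S.rest c a)) (S.rest b (S.sub a (S.rest c a)))) = S.sub (S.sub a (S.rest c a)) (S.rest b (S.sub a (S.rest c a)))
      rw [h]; exact S.C1 _
  · -- G4
    intro a b
    have h1 := S.E2s a b
    constructor
    · show S.rest (S.rest a b) (S.sub a (S.rest (S.sub a (S.rest b a)) a)) = S.sub a (S.rest (S.sub a (S.rest b a)) a)
      rw [h1]; exact S.E3 a b
    · show S.rest (S.sub a (S.rest (S.sub a (S.rest b a)) a)) (S.rest a b) = S.rest a b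
      rw [h1]; exact S.E3 b a
end

section
/- In an algebra satisfying (Ax1)–(Ax5), extend ≼ to filters (of the meet-semilattice (A, ·)) by F ≼ G iff G ▷ F ⊆ F, where G ▷ F := {g ▷ f : g ∈ G, f ∈ F}. Then ≼ is a preorder on the set of filters containing ⊇, and F ≼ A implies F = A. -/
/-- `F` is a filter of the meet-semilattice `(A, ·)`. -/
def IsFilter' {A : Type*} (sub : A → A → A) (F : Set A) : Prop :=
  F.Nonempty ∧ (∀ a b, a ∈ F → sle sub a b → b ∈ F) ∧
    (∀ a b, a ∈ F → b ∈ F → sub a (sub a b) ∈ F)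

/-- The set `G ▷ F = {g ▷ f : g ∈ G, f ∈ F}`. -/
def restSet {A : Type*} (rest : A → A → A) (G F : Set A) : Set A :=
  {x | ∃ g ∈ G, ∃ f ∈ F, x = rest g f}

/-- The preorder `≼` on filters: `F ≼ G` iff `G ▷ F ⊆ F`. -/
def precF {A : Type*} (rest : A → A → A) (F G : Set A) : Prop :=
  restSet rest G F ⊆ F

/-- Upward closure of a set. -/
def upcl {A : Type*} (sub : A → A → A) (S : Set A) : Set A :=
  {x | ∃ s ∈ S, sle sub s x}

theorem stmt13 {A : Type*} (sub rest : A → A → A)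
    (ax1 : ∀ a b : A, sub a (sub b a) = a)
    (ax2 : ∀ a b : A, sub a (sub a b) = sub b (sub b a))
    (ax3 : ∀ a b c : A, sub (sub a b) c = sub (sub a c) b)
    (ax4 : ∀ a b c : A, sub (rest a c) (sub (rest a c) (rest b c)) = rest (rest a b) c)
    (ax5 : ∀ a b : A, rest (sub a (sub a b)) a = sub a (sub a b)) :
    (∀ F : Set A, IsFilter' sub F → precF rest F F) ∧
    (∀ F G H : Set A, IsFilter' sub F → IsFilter' sub G → IsFilter' sub H →
      precF rest F G → precF rest G H → precF rest F H) ∧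
    (∀ F G : Set A, IsFilter' sub F → IsFilter' sub G → G ⊆ F → precF rest F G) ∧
    (∀ F : Set A, IsFilter' sub F → precF rest F Set.univ → F = Set.univ) := by
  have L1 : ∀ a b : A, sub (sub a b) b = sub a b := by
    intro a b
    have h := ax1 (sub a b) b
    rwa [ax1 b a] at h
  have LA : ∀ x y : A, sub (sub x y) (sub x y) = sub y y := by
    intro x y
    have h := ax2 (sub x y) y
    rwa [L1 x y, ax1 y x] at h
  have LB : ∀ x y : A, sub (sub (sub x y) x) (sub (sub x y) x) = sub x x := by
    intro x y
    have h := ax2 x (sub (sub x y) x)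
    rw [ax1 x (sub x y), L1 (sub x y) x] at h
    exact h.symm
  have zlem : ∀ x y : A, sub x x = sub y y := by
    intro x y
    have hb := LB x y
    rw [ax3 x y x, LA (sub x x) y] at hb
    exact hb.symm
  have Lmb : ∀ a b : A, sub (sub a (sub a b)) (sub (sub a (sub a b)) b) = sub a (sub a b) := by
    intro a b
    have h1 : sub (sub a (sub a b)) b = sub (sub a (sub a b)) (sub a (sub a b)) := by
      rw [ax3 a (sub a b) b]
      exact zlem (sub a b) (sub a (sub a b))
    rw [h1]
    exact ax1 _ _
  have Lma : ∀ a b : A, sub (sub a (sub a b)) (sub (sub a (sub a b)) a) = sub a (sub a b) := by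
    intro a b
    rw [ax2 a b]
    exact Lmb b a
  have key : ∀ F : Set A, IsFilter' sub F → ∀ g f, g ∈ F → f ∈ F → rest g f ∈ F := by
    intro F hF g f hg hf
    obtain ⟨-, hup, hmeet⟩ := hF
    have hp : sub f (sub f g) ∈ F := hmeet f g hf hg
    apply hup _ (rest g f) hp
    show sub (sub f (sub f g)) (sub (sub f (sub f g)) (rest g f)) = sub f (sub f g)
    have h4 := ax4 (sub f (sub f g)) g f
    rw [ax5 f g] at h4
    have hpg : rest (sub f (sub f g)) g = sub f (sub f g) := by
      rw [ax2 f g]; exact ax5 g f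
    rw [hpg, ax5 f g] at h4
    exact h4
  refine ⟨?_, ?_, ?_, ?_⟩
  · intro F hF x hx
    obtain ⟨g, hg, f, hf, rfl⟩ := hx
    exact key F hF g f hg hf
  · intro F G H hF hG hH hFG hGH x hx
    obtain ⟨h, hh, f, hf, rfl⟩ := hx
    obtain ⟨g, hg⟩ := hG.1
    have hu : rest h g ∈ G := hGH ⟨h, hh, g, hg, rfl⟩
    have hrf : rest (rest h g) f ∈ F := hFG ⟨rest h g, hu, f, hf, rfl⟩
    obtain ⟨-, hup, -⟩ := hF
    apply hup (rest (rest h g) f) (rest h f) hrf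
    show sub (rest (rest h g) f) (sub (rest (rest h g) f) (rest h f)) = rest (rest h g) f
    rw [← ax4 h g f]
    exact Lma (rest h f) (rest g f)
  · intro F G hF hG hGF x hx
    obtain ⟨g, hg, f, hf, rfl⟩ := hx
    exact key F hF g f (hGF hg) hf
  · intro F hF hFU
    apply Set.eq_univ_of_forall
    intro a
    obtain ⟨f, hf⟩ := hF.1
    have hma : sub f (sub f a) ∈ F := by
      have h := hFU ⟨sub f (sub f a), trivial, f, hf, rfl⟩
      rwa [ax5 f a] at h
    exact hF.2.1 _ a hma (Lmb f a)
end

section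
/- In an algebra satisfying (Ax1)–(Ax5), for any filters F and G of the meet-semilattice (A, ·), the upward closure of G ▷ F = {g ▷ f : g ∈ G, f ∈ F} is a filter, and it is the meet of the ≈-classes of F and G in the quotient of the filter poset by the equivalence ≈ induced by the filter preorder ≼ (F ≼ G iff G ▷ F ⊆ F). -/
theorem stmt14 {A : Type*} (sub rest : A → A → A)
    (ax1 : ∀ a b : A, sub a (sub b a) = a)
    (ax2 : ∀ a b : A, sub a (sub a b) = sub b (sub b a))
    (ax3 : ∀ a b c : A, sub (sub a b) c = sub (sub a c) b)
    (ax4 : ∀ a b c : A, sub (rest a c) (sub (rest a c) (rest b c)) = rest (rest a b) c)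
    (ax5 : ∀ a b : A, rest (sub a (sub a b)) a = sub a (sub a b))
    (F G : Set A) (hF : IsFilter' sub F) (hG : IsFilter' sub G) :
    IsFilter' sub (upcl sub (restSet rest G F)) ∧
    precF rest (upcl sub (restSet rest G F)) F ∧
    precF rest (upcl sub (restSet rest G F)) G ∧
    (∀ K : Set A, IsFilter' sub K → precF rest K F → precF rest K G →
      precF rest K (upcl sub (restSet rest G F))) := by
  have lemI : ∀ a b : A, (sub (sub a b) b) = (sub a b) := fun a b => (Eq.trans (congrArg (fun HOLE => (sub (sub a b) HOLE)) (ax1 b a).symm) (ax1 (sub a b) b))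
  have z1 : ∀ a b : A, (sub a (sub b b)) = a := fun a b => (Eq.trans (Eq.trans (Eq.trans (Eq.trans (Eq.trans (Eq.trans (Eq.trans (Eq.trans (Eq.trans (Eq.trans (Eq.trans (congrArg (fun HOLE => (sub a (sub b HOLE))) (ax1 b a).symm) (congrArg (fun HOLE => (sub a HOLE)) (ax2 b (sub a b)))) (congrArg (fun HOLE => (sub a (sub (sub a b) HOLE))) (lemI a b))) (congrArg (fun HOLE => (sub a (sub (sub a b) (sub HOLE b)))) (ax1 a b).symm)) (congrArg (fun HOLE => (sub a (sub (sub a b) HOLE))) (ax3 a (sub b a) b))) (congrArg (fun HOLE => (sub a HOLE)) (ax2 (sub a b) (sub b a)))) (congrArg (fun HOLE => (sub a (sub (sub b a) HOLE))) (ax3 b (sub a b) a).symm)) (congrArg (fun HOLE => (sub a (sub (sub b a) (sub HOLE a)))) (ax1 b a))) (congrArg (fun HOLE => (sub a (sub (sub b a) HOLE))) (lemI b a).symm)) (congrArg (fun HOLE => (sub a HOLE)) (ax2 a (sub b a)).symm)) (congrArg (fun HOLE => (sub a (sub a HOLE))) (ax1 a b))) (ax1 a a))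
  have z2 : ∀ a b : A, (sub (sub b b) a) = (sub b b) := fun a b => (Eq.trans (congrArg (fun HOLE => (sub (sub b b) HOLE)) (z1 a b).symm) (ax1 (sub b b) a))
  have z3 : ∀ a b : A, (sub a a) = (sub b b) := fun a b => (Eq.trans (Eq.trans (Eq.trans (congrArg (fun HOLE => (sub a HOLE)) (z1 a b).symm) (ax2 a (sub b b))) (congrArg (fun HOLE => (sub (sub b b) HOLE)) (z2 a b))) (z1 (sub b b) b))
  have lb1z : ∀ a b : A, (sub (sub a (sub a b)) a) = (sub a a) := fun a b => (Eq.trans (ax3 a (sub a b) a) (z2 (sub a b) a))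
  have lb2z : ∀ a b : A, (sub (sub a (sub a b)) b) = (sub a a) := fun a b => (Eq.trans (ax3 a (sub a b) b) (z3 a (sub a b)).symm)
  have bck : ∀ a b c : A, (sub (sub (sub a c) (sub a b)) (sub b c)) = (sub a a) := fun a b c => (Eq.trans (Eq.trans (Eq.trans (Eq.trans (Eq.trans (Eq.trans (congrArg (fun HOLE => (sub HOLE (sub b c))) (ax3 a c (sub a b))) (congrArg (fun HOLE => (sub (sub HOLE c) (sub b c))) (ax2 a b))) (congrArg (fun HOLE => (sub HOLE (sub b c))) (ax3 b (sub b a) c))) (ax3 (sub b c) (sub b c) (sub b a)).symm) (congrArg (fun HOLE => (sub HOLE (sub b a))) (z3 a (sub b c)).symm)) (ax3 a (sub b a) a).symm) (congrArg (fun HOLE => (sub HOLE a)) (ax1 a b)))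
  have trip : ∀ a b : A, (sub a (sub a (sub a b))) = (sub a b) := fun a b => (Eq.trans (Eq.trans (ax2 a (sub a b)) (ax3 a b (sub (sub a b) a))) (congrArg (fun HOLE => (sub HOLE b)) (ax1 a (sub a b))))
  have shiftb : ∀ a b c : A, (sub (sub (sub a b) c) b) = (sub (sub a b) c) := fun a b c => (Eq.trans (ax3 (sub a b) c b) (congrArg (fun HOLE => (sub HOLE c)) (lemI a b)))
  have cminus : ∀ a b : A, (sub (sub a b) a) = (sub a a) := fun a b => (Eq.trans (ax3 a b a) (z2 b a))
  have R0 : ∀ a : A, (rest a a) = a := fun a => (Eq.trans (Eq.trans (congrArg (fun HOLE => (rest HOLE a)) (ax1 a a).symm) (ax5 a a)) (ax1 a a))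
  have swap : ∀ a b c : A, (rest (rest a b) c) = (rest (rest b a) c) := fun a b c => (Eq.trans (Eq.trans (ax4 a b c).symm (ax2 (rest a c) (rest b c))) (ax4 b a c))
  have Mlem : ∀ a b : A, (rest (sub a (sub a b)) b) = (sub a (sub a b)) := fun a b => (Eq.trans (Eq.trans (congrArg (fun HOLE => (rest HOLE b)) (ax2 a b)) (ax5 b a)) (ax2 a b).symm)
  have mlb1 : ∀ a b : A, (sub (sub a (sub a b)) (sub (sub a (sub a b)) a)) = (sub a (sub a b)) := fun a b => (Eq.trans (congrArg (fun HOLE => (sub (sub a (sub a b)) HOLE)) (lb1z a b)) (z1 (sub a (sub a b)) a))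
  have mlb2 : ∀ a b : A, (sub (sub a (sub a b)) (sub (sub a (sub a b)) b)) = (sub a (sub a b)) := fun a b => (Eq.trans (congrArg (fun HOLE => (sub (sub a (sub a b)) HOLE)) (ax3 a (sub a b) b)) (z1 (sub a (sub a b)) (sub a b)))

  -- conditional helpers
  have sub0_of_le : ∀ x y : A, sub x (sub x y) = x → sub x y = sub x x := by
    intro x y h
    calc sub x y = sub (sub x (sub x y)) y := by rw [h]
      _ = sub x x := lb2z x y
  have le_of_sub0 : ∀ x y : A, sub x y = sub x x → sub x (sub x y) = x := by
    intro x y h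
    calc sub x (sub x y) = sub x (sub x x) := by rw [h]
      _ = x := ax1 x x
  have mtrans : ∀ x y z : A, sub x (sub x y) = x → sub y (sub y z) = y →
      sub x (sub x z) = x := by
    intro x y z h1 h2
    have e1 : sub x y = sub x x := sub0_of_le x y h1
    have e2 : sub y z = sub y y := sub0_of_le y z h2
    refine le_of_sub0 x z ?_
    calc sub x z = sub (sub (sub x z) (sub x x)) (sub y y) := by rw [z1, z1]
      _ = sub (sub (sub x z) (sub x y)) (sub y z) := by rw [e1, e2]
      _ = sub x x := bck x y z
  have glb : ∀ c a b : A, sub c (sub c a) = c → sub c (sub c b) = c →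
      sub c (sub c (sub a (sub a b))) = c := by
    intro c a b h1 h2
    have s1 : sub c a = sub c c := sub0_of_le c a h1
    have s2 : sub c b = sub c c := sub0_of_le c b h2
    have hX1 := bck c a (sub a (sub a b))
    rw [s1, z1] at hX1
    rw [trip] at hX1
    -- hX1 : sub (sub c (sub a (sub a b))) (sub a b) = sub c c
    have hX4 : sub (sub c (sub a (sub a b))) (sub (sub c (sub a (sub a b))) (sub a b))
        = sub c (sub a (sub a b)) := by rw [hX1]; exact z1 _ c
    have hX5 : sub (sub a b) (sub (sub a b) (sub c (sub a (sub a b))))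
        = sub c (sub a (sub a b)) := by
      rw [← ax2 (sub c (sub a (sub a b))) (sub a b)]; exact hX4
    have hX6 : sub (sub c (sub a (sub a b))) b = sub c (sub a (sub a b)) := by
      rw [← hX5]; exact shiftb a b (sub (sub a b) (sub c (sub a (sub a b))))
    have hX7 : sub (sub c (sub a (sub a b))) c = sub c c := cminus c (sub a (sub a b))
    have h8 := bck (sub c (sub a (sub a b))) c b
    rw [hX7, s2, hX6] at h8
    simp only [z1] at h8
    -- h8 : sub c (sub a (sub a b)) = sub (sub c (sub a (sub a b))) (sub c (sub a (sub a b)))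
    rw [h8]
    exact z1 c _
  have le_rest : ∀ x y : A, sub x (sub x y) = x → rest x y = x := by
    intro x y h
    have m1 := Mlem x y
    rw [h] at m1
    exact m1
  have vlem : ∀ a c : A, rest c (rest a c) = rest a c := by
    intro a c
    have h2 := ax4 a c (rest a c)
    rw [R0] at h2
    -- h2 : sub (rest a (rest a c)) (sub (rest a (rest a c)) (rest c (rest a c))) = rest a c
    have h3 := mlb2 (rest a (rest a c)) (rest c (rest a c))
    rw [h2] at h3
    -- h3 : sub (rest a c) (sub (rest a c) (rest c (rest a c))) = rest a c
    have h4 : rest (rest a c) (rest c (rest a c)) = rest a c := le_rest _ _ h3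
    have h5 := ax4 c (rest a c) (rest c (rest a c))
    rw [h4, R0] at h5
    -- h5 : sub (rest c (rest c (rest a c))) (sub (rest c (rest c (rest a c))) (rest a c)) = rest c (rest a c)
    have h6 := mlb2 (rest c (rest c (rest a c))) (rest a c)
    rw [h5] at h6
    -- h6 : sub (rest c (rest a c)) (sub (rest c (rest a c)) (rest a c)) = rest c (rest a c)
    exact h6.symm.trans ((ax2 (rest a c) (rest c (rest a c))).symm.trans h3)
  have rtc : ∀ a c : A, rest (rest a c) c = sub (rest a c) (sub (rest a c) c) := by
    intro a c
    have h := ax4 c a c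
    rw [R0] at h
    rw [← swap a c c] at h
    exact h.symm.trans (ax2 c (rest a c))
  have Dzero : ∀ a c : A, sub (rest a c) c = sub c c := by
    intro a c
    have d0 := cminus (rest a c) c
    have d1 : sub (sub (rest a c) c) (sub (sub (rest a c) c) (rest a c))
        = sub (rest a c) c := by rw [d0]; exact z1 _ (rest a c)
    have d2 := trip (rest a c) c
    have d3 : rest (sub (rest a c) c) (rest a c) = sub (rest a c) c := by
      have h := ax5 (rest a c) (sub (rest a c) c)
      rw [d2] at h
      exact h
    have d4 := ax4 (sub (rest a c) c) (rest a c) c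
    rw [d3] at d4
    -- d4 : sub (rest (sub (rest a c) c) c) (sub (rest (sub (rest a c) c) c) (rest (rest a c) c)) = rest (sub (rest a c) c) c
    rw [rtc a c] at d4
    -- now the rest (rest a c) c is replaced by meet
    have d7 := mtrans (rest (sub (rest a c) c) c)
      (sub (rest a c) (sub (rest a c) c)) (rest a c) d4 (mlb1 (rest a c) c)
    have d8 : rest (rest (sub (rest a c) c) c) (rest a c) = rest (sub (rest a c) c) c :=
      le_rest _ _ d7
    have d9 := ax4 (sub (rest a c) c) c (rest a c)
    rw [d3, vlem a c, d1] at d9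
    -- d9 : sub (rest a c) c = rest (rest (sub (rest a c) c) c) (rest a c)
    have d10 : sub (rest a c) c = rest (sub (rest a c) c) c := d9.trans d8
    have d11 := mtrans (rest (sub (rest a c) c) c)
      (sub (rest a c) (sub (rest a c) c)) c d4 (mlb2 (rest a c) c)
    rw [← d10] at d11
    rw [lemI (rest a c) c] at d11
    -- d11 : sub (sub (rest a c) c) (sub (rest a c) c) = sub (rest a c) c
    exact (d11.symm).trans (z3 (sub (rest a c) c) c)
  have klem : ∀ a c : A, sub (rest a c) (sub (rest a c) c) = rest a c := by
    intro a c
    rw [Dzero a c]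
    exact z1 (rest a c) c
  have wlem : ∀ a b : A, rest a (rest a b) = rest a b := by
    intro a b
    have w1 := ax4 a b (rest a b)
    rw [R0, vlem a b] at w1
    -- w1 : sub (rest a (rest a b)) (sub (rest a (rest a b)) (rest a b)) = rest a b
    exact (klem a (rest a b)).symm.trans w1
  have C3 : ∀ x a c : A, rest a x = x → sub x (sub x c) = x →
      sub x (sub x (rest a c)) = x := by
    intro x a c h1 h2
    have c1 : rest x c = x := le_rest x c h2
    have c2 := ax4 x a c
    rw [c1] at c2
    have c3 := swap x a c
    rw [h1, c1] at c3
    exact c2.trans (c3.symm ▸ c3)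
  have iv : ∀ u v : A, sub (sub u (sub u v)) (sub (sub u (sub u v)) (rest v u))
      = sub u (sub u v) := by
    intro u v
    have i1 := ax4 (sub u (sub u v)) v u
    rw [ax5 u v, Mlem u v, ax5 u v] at i1
    exact i1
  have rassoc : ∀ a b c : A, rest a (rest b c) = rest (rest a b) c := by
    intro a b c
    have a1 := klem a (rest b c)
    have a2 := klem b c
    have a3 := mtrans (rest a (rest b c)) (rest b c) c a1 a2
    have a4 := wlem a (rest b c)
    have a5 := C3 (rest a (rest b c)) a c a4 a3
    have a6 := glb (rest a (rest b c)) (rest a c) (rest b c) a5 a1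
    have a7 := ax4 a c (rest b c)
    rw [vlem b c, a1] at a7
    -- a7 : rest a (rest b c) = rest (rest a c) (rest b c)
    have a8 := iv (rest b c) (rest a c)
    rw [← a7] at a8
    rw [ax2 (rest b c) (rest a c)] at a8
    -- a8 : sub (m (rest a c) (rest b c)) (sub .. (rest a (rest b c))) = m (rest a c) (rest b c)
    exact (a6.symm.trans ((ax2 (rest a (rest b c))
      (sub (rest a c) (sub (rest a c) (rest b c)))).trans a8)).trans (ax4 a b c)
  have mono1 : ∀ x y z : A, sub x (sub x y) = x →
      sub (rest x z) (sub (rest x z) (rest y z)) = rest x z := by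
    intro x y z h
    have p1 : rest x y = x := le_rest x y h
    have p2 := ax4 x y z
    rw [p1] at p2
    exact p2
  have mono2 : ∀ u v w : A, sub v (sub v w) = v →
      sub (rest u v) (sub (rest u v) (rest u w)) = rest u v := by
    intro u v w h
    exact C3 (rest u v) u w (wlem u v) (mtrans (rest u v) v w (klem u v) h)
  have prec_of_le : ∀ x z : A, sub x (sub x z) = x → rest z x = x := by
    intro x z h
    rw [← le_rest x z h]
    exact vlem x z
  have compat : ∀ z u y : A, rest z y = y → rest z (rest u y) = rest u y := by
    intro z u y h
    exact (rassoc z u y).trans ((swap z u y).trans ((rassoc u z y).symm.trans (by rw [h])))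
  have compat2 : ∀ z u y : A, rest u z = u → rest z (rest u y) = rest u y := by
    intro z u y h
    exact (rassoc z u y).trans ((swap z u y).trans (by rw [h]))
  obtain ⟨⟨f0, hf0⟩, hFup, hFmeet⟩ := hF
  obtain ⟨⟨g0, hg0⟩, hGup, hGmeet⟩ := hG
  refine ⟨⟨⟨rest g0 f0, ⟨rest g0 f0, ⟨g0, hg0, f0, hf0, rfl⟩, ax1 (rest g0 f0) (rest g0 f0)⟩⟩, ?_, ?_⟩, ?_, ?_, ?_⟩
  · -- upward closed
    rintro x y ⟨s, hs, hsx⟩ hxy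
    exact ⟨s, hs, mtrans s x y hsx hxy⟩
  · -- meet closed
    rintro x y ⟨s, ⟨g1, hg1, f1, hf1, rfl⟩, hsx⟩ ⟨t, ⟨g2, hg2, f2, hf2, rfl⟩, hty⟩
    refine ⟨rest (sub g1 (sub g1 g2)) (sub f1 (sub f1 f2)),
      ⟨_, hGmeet g1 g2 hg1 hg2, _, hFmeet f1 f2 hf1 hf2, rfl⟩, ?_⟩
    have w1 : sub (rest (sub g1 (sub g1 g2)) (sub f1 (sub f1 f2)))
        (sub (rest (sub g1 (sub g1 g2)) (sub f1 (sub f1 f2))) (rest g1 f1))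
        = rest (sub g1 (sub g1 g2)) (sub f1 (sub f1 f2)) :=
      mtrans _ (rest g1 (sub f1 (sub f1 f2))) (rest g1 f1)
        (mono1 (sub g1 (sub g1 g2)) g1 (sub f1 (sub f1 f2)) (mlb1 g1 g2))
        (mono2 g1 (sub f1 (sub f1 f2)) f1 (mlb1 f1 f2))
    have w2 : sub (rest (sub g1 (sub g1 g2)) (sub f1 (sub f1 f2)))
        (sub (rest (sub g1 (sub g1 g2)) (sub f1 (sub f1 f2))) (rest g2 f2))
        = rest (sub g1 (sub g1 g2)) (sub f1 (sub f1 f2)) :=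
      mtrans _ (rest g2 (sub f1 (sub f1 f2))) (rest g2 f2)
        (mono1 (sub g1 (sub g1 g2)) g2 (sub f1 (sub f1 f2)) (mlb2 g1 g2))
        (mono2 g2 (sub f1 (sub f1 f2)) f2 (mlb2 f1 f2))
    exact glb _ x y (mtrans _ (rest g1 f1) x w1 hsx) (mtrans _ (rest g2 f2) y w2 hty)
  · -- precF H F
    rintro x ⟨f1, hf1, h, ⟨s, ⟨g1, hg1, f2, hf2, rfl⟩, hsh⟩, rfl⟩
    refine ⟨rest g1 (sub f2 (sub f2 f1)), ⟨g1, hg1, _, hFmeet f2 f1 hf2 hf1, rfl⟩, ?_⟩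
    have hwh : sub (rest g1 (sub f2 (sub f2 f1)))
        (sub (rest g1 (sub f2 (sub f2 f1))) h) = rest g1 (sub f2 (sub f2 f1)) :=
      mtrans _ (rest g1 f2) h (mono2 g1 (sub f2 (sub f2 f1)) f2 (mlb1 f2 f1)) hsh
    have hcomp : rest f1 (rest g1 (sub f2 (sub f2 f1))) = rest g1 (sub f2 (sub f2 f1)) :=
      compat f1 g1 (sub f2 (sub f2 f1))
        (prec_of_le (sub f2 (sub f2 f1)) f1 (mlb2 f2 f1))
    have := mono2 f1 (rest g1 (sub f2 (sub f2 f1))) h hwh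
    rw [hcomp] at this
    exact this
  · -- precF H G
    rintro x ⟨g1, hg1, h, ⟨s, ⟨g2, hg2, f2, hf2, rfl⟩, hsh⟩, rfl⟩
    refine ⟨rest (sub g2 (sub g2 g1)) f2, ⟨_, hGmeet g2 g1 hg2 hg1, f2, hf2, rfl⟩, ?_⟩
    have hwh : sub (rest (sub g2 (sub g2 g1)) f2)
        (sub (rest (sub g2 (sub g2 g1)) f2) h) = rest (sub g2 (sub g2 g1)) f2 :=
      mtrans _ (rest g2 f2) h (mono1 (sub g2 (sub g2 g1)) g2 f2 (mlb1 g2 g1)) hsh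
    have hcomp : rest g1 (rest (sub g2 (sub g2 g1)) f2) = rest (sub g2 (sub g2 g1)) f2 :=
      compat2 g1 (sub g2 (sub g2 g1)) f2
        (le_rest (sub g2 (sub g2 g1)) g1 (mlb2 g2 g1))
    have := mono2 g1 (rest (sub g2 (sub g2 g1)) f2) h hwh
    rw [hcomp] at this
    exact this
  · -- universal property
    rintro K ⟨hKne, hKup, hKmeet⟩ hKF hKG x ⟨h, ⟨s, ⟨g1, hg1, f1, hf1, rfl⟩, hsh⟩, k, hk, rfl⟩
    have hfk : rest f1 k ∈ K := hKF ⟨f1, hf1, k, hk, rfl⟩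
    have hgk : rest g1 k ∈ K := hKG ⟨g1, hg1, k, hk, rfl⟩
    have hmk : sub (rest f1 k) (sub (rest f1 k) (rest g1 k)) ∈ K :=
      hKmeet _ _ hfk hgk
    refine hKup _ (rest h k) hmk ?_
    -- sle: m (m (rest f1 k) (rest g1 k)) (rest h k) = m (rest f1 k) (rest g1 k)
    have e1 := ax4 f1 g1 k
    -- e1 : m (rest f1 k) (rest g1 k) = rest (rest f1 g1) k
    have e2 := swap f1 g1 k
    have hsh' : rest (rest g1 f1) h = rest g1 f1 := le_rest (rest g1 f1) h hsh
    have e3 := ax4 (rest g1 f1) h k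
    rw [hsh'] at e3
    -- e3 : sub (rest (rest g1 f1) k) (sub (rest (rest g1 f1) k) (rest h k)) = rest (rest g1 f1) k
    rw [e1, e2]
    exact e3
end

section
/- In a subtraction algebra S, for every a ∈ S there is a bijection between ultrafilters of the Boolean algebra a↓ and maximal (proper) filters of S containing a: a maximal filter μ containing a corresponds to μ ∩ a↓, and an ultrafilter ν of a↓ corresponds to its upward closure ν↑ in S; these constructions are mutually inverse. -/
/-- A maximal filter: proper and maximal among proper filters. -/
def IsMaxFilterS {A : Type*} (sub : A → A → A) (F : Set A) : Prop :=
  IsFilter' sub F ∧ F ≠ Set.univ ∧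
    ∀ G : Set A, IsFilter' sub G → G ≠ Set.univ → F ⊆ G → G = F

/-- An ultrafilter of the Boolean algebra `a↓` (meet `·`, bottom `0`, top `a`,
complement `b ↦ a - b`). -/
def IsUltraDown {A : Type*} (sub : A → A → A) (a : A) (ν : Set A) : Prop :=
  (∀ b ∈ ν, sle sub b a) ∧ ν.Nonempty ∧
    (∀ x y, x ∈ ν → sle sub x y → sle sub y a → y ∈ ν) ∧
    (∀ x y, x ∈ ν → y ∈ ν → sub x (sub x y) ∈ ν) ∧
    (∀ b, sle sub b a → (b ∈ ν ↔ sub a b ∉ ν))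


namespace St15

variable {A : Type*} (sub : A → A → A)
  (sax1 : ∀ a b : A, sub a (sub b a) = a)
  (sax2 : ∀ a b : A, sub a (sub a b) = sub b (sub b a))
  (sax3 : ∀ a b c : A, sub (sub a b) c = sub (sub a c) b)

set_option linter.unusedSectionVars false
include sax1 sax2 sax3

lemma E1 (x y : A) : sub (sub x y) (sub x x) = sub x y := by
  rw [sax3, sax1]

lemma E2 (x y : A) : sub (sub x x) (sub x y) = sub x x := by
  conv_lhs => rw [← E1 sub sax1 sax2 sax3 x y]
  exact sax1 _ _

lemma K (u v : A) : sub (sub u v) (sub u v) = sub v v := by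
  calc sub (sub u v) (sub u v) = sub (sub u (sub u v)) v := by rw [sax3]
    _ = sub (sub v (sub v u)) v := by rw [sax2]
    _ = sub (sub v v) (sub v u) := by rw [sax3]
    _ = sub v v := E2 sub sax1 sax2 sax3 v u

lemma zero_eq (a b : A) : sub a a = sub b b := by
  calc sub a a = sub (sub b a) (sub b a) := (K sub sax1 sax2 sax3 b a).symm
    _ = sub (sub b (sub b a)) (sub b (sub b a)) := (K sub sax1 sax2 sax3 b (sub b a)).symm
    _ = sub (sub a (sub a b)) (sub a (sub a b)) := by rw [sax2 a b]
    _ = sub (sub a b) (sub a b) := K sub sax1 sax2 sax3 a (sub a b)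
    _ = sub b b := K sub sax1 sax2 sax3 a b

lemma zero_sub (a x : A) : sub (sub a a) x = sub a a := by
  rw [zero_eq sub sax1 sax2 sax3 a x]
  have h := sax1 (sub x x) x
  rwa [sax1 x x] at h

lemma sub_zero (a x : A) : sub x (sub a a) = x := by
  rw [zero_eq sub sax1 sax2 sax3 a x]
  exact sax1 x x

lemma le_iff (x y : A) : sle sub x y ↔ sub x y = sub x x := by
  constructor
  · intro h
    calc sub x y = sub (sub x (sub x y)) y := by rw [h]
      _ = sub (sub x y) (sub x y) := by rw [sax3]
      _ = sub y y := K sub sax1 sax2 sax3 x y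
      _ = sub x x := zero_eq sub sax1 sax2 sax3 y x
  · intro h
    show sub x (sub x y) = x
    rw [h]
    exact sax1 x x

lemma le_refl (x : A) : sle sub x x := sax1 x x

lemma le_sub_eq {x y : A} (h : sle sub x y) : sub y (sub y x) = x :=
  (sax2 x y).symm.trans h

lemma le_trans {x y z : A} (h1 : sle sub x y) (h2 : sle sub y z) : sle sub x z := by
  apply (le_iff sub sax1 sax2 sax3 x z).mpr
  conv_lhs => rw [← le_sub_eq sub sax1 sax2 sax3 h1]
  calc sub (sub y (sub y x)) z = sub (sub y z) (sub y x) := by rw [sax3]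
    _ = sub (sub y y) (sub y x) := by rw [(le_iff sub sax1 sax2 sax3 y z).mp h2]
    _ = sub y y := zero_sub sub sax1 sax2 sax3 y (sub y x)
    _ = sub x x := zero_eq sub sax1 sax2 sax3 y x

lemma le_antisymm {x y : A} (h1 : sle sub x y) (h2 : sle sub y x) : x = y := by
  calc x = sub x (sub x y) := h1.symm
    _ = sub y (sub y x) := sax2 x y
    _ = sub y (sub y y) := by rw [(le_iff sub sax1 sax2 sax3 y x).mp h2]
    _ = y := sax1 y y

lemma sub_sub_self (x y : A) : sub (sub x y) x = sub x x :=
  (sax3 x y x).trans (zero_sub sub sax1 sax2 sax3 x y)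

lemma sub_le (x y : A) : sle sub (sub x y) x := by
  apply (le_iff sub sax1 sax2 sax3 _ _).mpr
  calc sub (sub x y) x = sub x x := sub_sub_self sub sax1 sax2 sax3 x y
    _ = sub y y := zero_eq sub sax1 sax2 sax3 x y
    _ = sub (sub x y) (sub x y) := (K sub sax1 sax2 sax3 x y).symm

lemma meet_le_left (x y : A) : sle sub (sub x (sub x y)) x := sub_le sub sax1 sax2 sax3 x (sub x y)

lemma meet_le_right (x y : A) : sle sub (sub x (sub x y)) y := by
  rw [sax2 x y]
  exact sub_le sub sax1 sax2 sax3 y (sub y x)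

lemma L8 (x y : A) : sub x (sub x (sub x y)) = sub x y := by
  calc sub x (sub x (sub x y)) = sub (sub x y) (sub (sub x y) x) := sax2 x (sub x y)
    _ = sub (sub x y) (sub x x) := by rw [sub_sub_self sub sax1 sax2 sax3 x y]
    _ = sub x y := E1 sub sax1 sax2 sax3 x y

lemma glb {c x y : A} (h1 : sle sub c x) (h2 : sle sub c y) :
    sle sub c (sub x (sub x y)) := by
  apply (le_iff sub sax1 sax2 sax3 _ _).mpr
  calc sub c (sub x (sub x y)) = sub c (sub y (sub y x)) := by rw [sax2 x y]
    _ = sub (sub y (sub y c)) (sub y (sub y x)) := by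
        conv_lhs => rw [← le_sub_eq sub sax1 sax2 sax3 h2]
    _ = sub (sub y (sub y (sub y x))) (sub y c) := sax3 y (sub y c) (sub y (sub y x))
    _ = sub (sub y x) (sub y c) := by rw [L8 sub sax1 sax2 sax3 y x]
    _ = sub (sub y (sub y c)) x := sax3 y x (sub y c)
    _ = sub c x := by rw [le_sub_eq sub sax1 sax2 sax3 h2]
    _ = sub c c := (le_iff sub sax1 sax2 sax3 c x).mp h1

lemma meet_mono {s t x y : A} (hs : sle sub s x) (ht : sle sub t y) :
    sle sub (sub s (sub s t)) (sub x (sub x y)) :=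
  glb sub sax1 sax2 sax3
    (le_trans sub sax1 sax2 sax3 (meet_le_left sub sax1 sax2 sax3 s t) hs)
    (le_trans sub sax1 sax2 sax3 (meet_le_right sub sax1 sax2 sax3 s t) ht)

lemma bot_le (a x : A) : sle sub (sub a a) x := by
  show sub (sub a a) (sub (sub a a) x) = sub a a
  rw [zero_sub sub sax1 sax2 sax3 a x]
  exact zero_sub sub sax1 sax2 sax3 a (sub a a)

lemma eq_bot {a x : A} (h : sle sub x (sub a a)) : x = sub a a :=
  le_antisymm sub sax1 sax2 sax3 h (bot_le sub sax1 sax2 sax3 a x)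

lemma sub_sub_cancel (x y : A) : sub (sub x y) y = sub x y := by
  have h := sax1 (sub x y) y
  rwa [sax1 y x] at h

lemma compl_meet (a b : A) : sub b (sub b (sub a b)) = sub b b := by
  calc sub b (sub b (sub a b)) = sub (sub a b) (sub (sub a b) b) := sax2 b (sub a b)
    _ = sub (sub a b) (sub a b) := by rw [sub_sub_cancel sub sax1 sax2 sax3 a b]
    _ = sub b b := K sub sax1 sax2 sax3 a b

lemma mono {x y : A} (z : A) (h : sle sub x y) : sle sub (sub x z) (sub y z) := by
  apply (le_iff sub sax1 sax2 sax3 _ _).mpr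
  calc sub (sub x z) (sub y z)
      = sub (sub (sub y (sub y x)) z) (sub y z) := by
        conv_lhs => rw [← le_sub_eq sub sax1 sax2 sax3 h]
    _ = sub (sub (sub y z) (sub y x)) (sub y z) := by rw [sax3 y (sub y x) z]
    _ = sub (sub (sub y z) (sub y z)) (sub y x) := sax3 (sub y z) (sub y x) (sub y z)
    _ = sub (sub y z) (sub y z) := zero_sub sub sax1 sax2 sax3 (sub y z) (sub y x)
    _ = sub (sub x z) (sub x z) := zero_eq sub sax1 sax2 sax3 (sub y z) (sub x z)

lemma disj_le_compl {x a b : A} (h : sub x (sub x b) = sub x x) (hxa : sle sub x a) :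
    sle sub x (sub a b) := by
  have hxb : sub x b = x := by
    calc sub x b = sub x (sub x (sub x b)) := (L8 sub sax1 sax2 sax3 x b).symm
      _ = sub x (sub x x) := by rw [h]
      _ = x := sax1 x x
  have := mono sub sax1 sax2 sax3 b hxa
  rwa [hxb] at this

end St15

open St15 in
theorem stmt15 {A : Type*} (sub : A → A → A)
    (sax1 : ∀ a b : A, sub a (sub b a) = a)
    (sax2 : ∀ a b : A, sub a (sub a b) = sub b (sub b a))
    (sax3 : ∀ a b c : A, sub (sub a b) c = sub (sub a c) b) :
    ∀ a : A,
    (∀ μ : Set A, IsMaxFilterS sub μ → a ∈ μ →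
      IsUltraDown sub a (μ ∩ {b | sle sub b a})) ∧
    (∀ ν : Set A, IsUltraDown sub a ν →
      IsMaxFilterS sub (upcl sub ν) ∧ a ∈ upcl sub ν) ∧
    (∀ μ : Set A, IsMaxFilterS sub μ → a ∈ μ →
      upcl sub (μ ∩ {b | sle sub b a}) = μ) ∧
    (∀ ν : Set A, IsUltraDown sub a ν → upcl sub ν ∩ {b | sle sub b a} = ν) := by
  intro a
  have univ_of_zero : ∀ (F : Set A) (z : A), IsFilter' sub F → sub z z ∈ F →
      F = Set.univ := by
    intro F z hF h0
    apply Set.eq_univ_iff_forall.mpr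
    intro x
    exact hF.2.1 _ x h0 (bot_le sub sax1 sax2 sax3 z x)
  refine ⟨?_, ?_, ?_, ?_⟩
  · -- Part 1
    intro μ hμ haμ
    obtain ⟨⟨hne, hup, hmeet⟩, hproper, hmax⟩ := hμ
    refine ⟨fun b hb => hb.2, ⟨a, haμ, le_refl sub sax1 sax2 sax3 a⟩, ?_, ?_, ?_⟩
    · intro x y hx hxy hya
      exact ⟨hup x y hx.1 hxy, hya⟩
    · intro x y hx hy
      exact ⟨hmeet x y hx.1 hy.1,
        le_trans sub sax1 sax2 sax3 (meet_le_right sub sax1 sax2 sax3 x y) hy.2⟩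
    · intro b hba
      constructor
      · intro hb hc
        have h0 : sub b b ∈ μ := by
          have h := hmeet b (sub a b) hb.1 hc.1
          rwa [compl_meet sub sax1 sax2 sax3 a b] at h
        exact hproper (univ_of_zero μ b ⟨hne, hup, hmeet⟩ h0)
      · intro hnc
        by_contra hb
        have hbμ : b ∉ μ := fun h => hb ⟨h, hba⟩
        set G : Set A := {x | ∃ m ∈ μ, sle sub (sub m (sub m b)) x} with hGdef
        have hGfil : IsFilter' sub G := by
          refine ⟨⟨b, a, haμ, meet_le_right sub sax1 sax2 sax3 a b⟩, ?_, ?_⟩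
          · rintro x y ⟨m, hm, h⟩ hxy
            exact ⟨m, hm, le_trans sub sax1 sax2 sax3 h hxy⟩
          · rintro x y ⟨m, hm, hmx⟩ ⟨n, hn, hny⟩
            refine ⟨sub m (sub m n), hmeet m n hm hn, ?_⟩
            apply glb sub sax1 sax2 sax3
            · exact le_trans sub sax1 sax2 sax3
                (meet_mono sub sax1 sax2 sax3 (meet_le_left sub sax1 sax2 sax3 m n)
                  (le_refl sub sax1 sax2 sax3 b)) hmx
            · exact le_trans sub sax1 sax2 sax3
                (meet_mono sub sax1 sax2 sax3 (meet_le_right sub sax1 sax2 sax3 m n)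
                  (le_refl sub sax1 sax2 sax3 b)) hny
        have hμG : μ ⊆ G := fun m hm => ⟨m, hm, meet_le_left sub sax1 sax2 sax3 m b⟩
        have hbG : b ∈ G := ⟨a, haμ, meet_le_right sub sax1 sax2 sax3 a b⟩
        have hGuniv : G = Set.univ := by
          by_contra hGne
          exact hbμ ((hmax G hGfil hGne hμG) ▸ hbG)
        have h0G : sub a a ∈ G := by rw [hGuniv]; trivial
        obtain ⟨m, hm, hm0⟩ := h0G
        have hmb0 : sub m (sub m b) = sub a a := eq_bot sub sax1 sax2 sax3 hm0
        have hm'μ : sub m (sub m a) ∈ μ := hmeet m a hm haμ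
        have hm'a : sle sub (sub m (sub m a)) a := meet_le_right sub sax1 sax2 sax3 m a
        have hm'm : sle sub (sub m (sub m a)) m := meet_le_left sub sax1 sax2 sax3 m a
        have hdisj : sub (sub m (sub m a)) (sub (sub m (sub m a)) b)
            = sub (sub m (sub m a)) (sub m (sub m a)) := by
          have h1 := meet_mono sub sax1 sax2 sax3 hm'm (le_refl sub sax1 sax2 sax3 b)
          rw [hmb0] at h1
          have h2 := eq_bot sub sax1 sax2 sax3 h1
          rw [h2]
          exact zero_eq sub sax1 sax2 sax3 a (sub m (sub m a))
        have hle : sle sub (sub m (sub m a)) (sub a b) :=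
          disj_le_compl sub sax1 sax2 sax3 hdisj hm'a
        exact hnc ⟨hup _ (sub a b) hm'μ hle, sub_le sub sax1 sax2 sax3 a b⟩
  · -- Part 2
    intro ν hν
    obtain ⟨hsub_a, hne, hupin, hmeetin, hultra⟩ := hν
    have haν : a ∈ ν := by
      obtain ⟨t, ht⟩ := hne
      exact hupin t a ht (hsub_a t ht) (le_refl sub sax1 sax2 sax3 a)
    have hν_up : ν ⊆ upcl sub ν := fun s hs => ⟨s, hs, le_refl sub sax1 sax2 sax3 s⟩
    have haU : a ∈ upcl sub ν := ⟨a, haν, le_refl sub sax1 sax2 sax3 a⟩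
    have hUfil : IsFilter' sub (upcl sub ν) := by
      refine ⟨⟨a, haU⟩, ?_, ?_⟩
      · rintro x y ⟨s, hs, hsx⟩ hxy
        exact ⟨s, hs, le_trans sub sax1 sax2 sax3 hsx hxy⟩
      · rintro x y ⟨s, hs, hsx⟩ ⟨t, ht, hty⟩
        exact ⟨sub s (sub s t), hmeetin s t hs ht, meet_mono sub sax1 sax2 sax3 hsx hty⟩
    have h0ν : sub a a ∉ ν := by
      intro h0
      have h2 := (hultra (sub a a) (bot_le sub sax1 sax2 sax3 a a)).mp h0
      rw [sub_zero sub sax1 sax2 sax3 a a] at h2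
      exact h2 haν
    have hproperU : upcl sub ν ≠ Set.univ := by
      intro h
      have h0 : sub a a ∈ upcl sub ν := by rw [h]; trivial
      obtain ⟨s, hs, hs0⟩ := h0
      rw [eq_bot sub sax1 sax2 sax3 hs0] at hs
      exact h0ν hs
    refine ⟨⟨hUfil, hproperU, ?_⟩, haU⟩
    intro G hG hGne hsubG
    apply Set.Subset.antisymm ?_ hsubG
    intro g hg
    have hmG : sub g (sub g a) ∈ G := hG.2.2 g a hg (hsubG haU)
    have hma : sle sub (sub g (sub g a)) a := meet_le_right sub sax1 sax2 sax3 g a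
    have hmν : sub g (sub g a) ∈ ν := by
      by_contra hmν
      have hcompl : sub a (sub g (sub g a)) ∈ ν := by
        by_contra hc
        exact hmν ((hultra _ hma).mpr hc)
      have hcG : sub a (sub g (sub g a)) ∈ G := hsubG (hν_up hcompl)
      have h0 := hG.2.2 _ _ hmG hcG
      rw [compl_meet sub sax1 sax2 sax3 a (sub g (sub g a))] at h0
      exact hGne (univ_of_zero G (sub g (sub g a)) hG h0)
    exact ⟨sub g (sub g a), hmν, meet_le_left sub sax1 sax2 sax3 g a⟩
  · -- Part 3
    intro μ hμ haμ
    obtain ⟨⟨hne, hup, hmeet⟩, _, _⟩ := hμ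
    ext x
    constructor
    · rintro ⟨s, ⟨hsμ, _⟩, hsx⟩
      exact hup s x hsμ hsx
    · intro hx
      exact ⟨sub x (sub x a), ⟨hmeet x a hx haμ, meet_le_right sub sax1 sax2 sax3 x a⟩,
        meet_le_left sub sax1 sax2 sax3 x a⟩
  · -- Part 4
    intro ν hν
    obtain ⟨hsub_a, hne, hupin, _, _⟩ := hν
    ext x
    constructor
    · rintro ⟨⟨s, hs, hsx⟩, hxa⟩
      exact hupin s x hs hsx hxa
    · intro hx
      exact ⟨⟨x, hx, le_refl sub sax1 sax2 sax3 x⟩, hsub_a x hx⟩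
end

section
/- Let F be a filter of a subtraction algebra S. Then F is maximal if and only if there exists a ∈ F such that for all b ∈ S exactly one of a·b and a - b belongs to F, if and only if for all a ∈ F and all b ∈ S exactly one of a·b and a - b belongs to F. -/
section SubAlgAux

variable {A : Type*} {sub : A → A → A}

private lemma sg1 (h1 : ∀ a b : A, sub a (sub b a) = a) (x y : A) :
    sub (sub x y) y = sub x y := by
  have h := h1 (sub x y) y
  rwa [h1 y x] at h

private lemma sd1 (h1 : ∀ a b : A, sub a (sub b a) = a) (x : A) :
    sub x (sub x x) = x := h1 x x

private lemma sd2 (h1 : ∀ a b : A, sub a (sub b a) = a) (x : A) :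
    sub (sub x x) x = sub x x := by
  have h := h1 (sub x x) x
  rwa [sd1 h1 x] at h

private lemma sconst (h1 : ∀ a b : A, sub a (sub b a) = a)
    (h2 : ∀ a b : A, sub a (sub a b) = sub b (sub b a))
    (h3 : ∀ a b c : A, sub (sub a b) c = sub (sub a c) b) (x y : A) :
    sub x x = sub y y := by
  have hxp : sub x (sub (sub x x) y) = x := by
    have h3' : sub (sub x y) x = sub (sub x x) y := h3 x y x
    rw [← h3']
    exact h1 x (sub x y)
  have hyp : sub y (sub (sub x x) y) = y := h1 y (sub x x)
  have hpy : sub (sub (sub x x) y) y = sub (sub x x) y := sg1 h1 (sub x x) y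
  have hpx : sub (sub (sub x x) y) x = sub (sub x x) y := by
    calc sub (sub (sub x x) y) x = sub (sub (sub x x) x) y := h3 (sub x x) y x
      _ = sub (sub x x) y := by rw [sd2 h1 x]
  have e1 : sub x x = sub (sub (sub x x) y) (sub (sub x x) y) := by
    have h := h2 x (sub (sub x x) y)
    rwa [hxp, hpx] at h
  have e2 : sub y y = sub (sub (sub x x) y) (sub (sub x x) y) := by
    have h := h2 y (sub (sub x x) y)
    rwa [hyp, hpy] at h
  rw [e1, e2]

private lemma szero_sub (h1 : ∀ a b : A, sub a (sub b a) = a)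
    (h2 : ∀ a b : A, sub a (sub a b) = sub b (sub b a))
    (h3 : ∀ a b c : A, sub (sub a b) c = sub (sub a c) b) (x t : A) :
    sub (sub x x) t = sub x x := by
  rw [sconst h1 h2 h3 x t]
  exact sd2 h1 t

private lemma ssub_zero (h1 : ∀ a b : A, sub a (sub b a) = a)
    (h2 : ∀ a b : A, sub a (sub a b) = sub b (sub b a))
    (h3 : ∀ a b c : A, sub (sub a b) c = sub (sub a c) b) (t x : A) :
    sub t (sub x x) = t := by
  rw [sconst h1 h2 h3 x t]
  exact sd1 h1 t

private lemma of_le (h1 : ∀ a b : A, sub a (sub b a) = a)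
    (h2 : ∀ a b : A, sub a (sub a b) = sub b (sub b a))
    (h3 : ∀ a b c : A, sub (sub a b) c = sub (sub a c) b) {a b c : A}
    (h : sub a b = sub c c) : sle sub a b := by
  unfold sle
  rw [h]
  exact ssub_zero h1 h2 h3 a c

private lemma le_to (h1 : ∀ a b : A, sub a (sub b a) = a)
    (h2 : ∀ a b : A, sub a (sub a b) = sub b (sub b a))
    (h3 : ∀ a b c : A, sub (sub a b) c = sub (sub a c) b) {a b : A} (e : A)
    (h : sle sub a b) : sub a b = sub e e := by
  unfold sle at h
  calc sub a b = sub (sub a (sub a b)) b := by rw [h]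
    _ = sub (sub a b) (sub a b) := h3 a (sub a b) b
    _ = sub e e := sconst h1 h2 h3 (sub a b) e

private lemma sub_le (h1 : ∀ a b : A, sub a (sub b a) = a)
    (h2 : ∀ a b : A, sub a (sub a b) = sub b (sub b a))
    (h3 : ∀ a b c : A, sub (sub a b) c = sub (sub a c) b) (a b : A) :
    sle sub (sub a b) a := by
  apply of_le h1 h2 h3 (c := a)
  rw [h3 a b a]
  exact szero_sub h1 h2 h3 a b

private lemma meet_le_left (h1 : ∀ a b : A, sub a (sub b a) = a)
    (h2 : ∀ a b : A, sub a (sub a b) = sub b (sub b a))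
    (h3 : ∀ a b c : A, sub (sub a b) c = sub (sub a c) b) (a b : A) :
    sle sub (sub a (sub a b)) a := sub_le h1 h2 h3 a (sub a b)

private lemma meet_le_right (h1 : ∀ a b : A, sub a (sub b a) = a)
    (h2 : ∀ a b : A, sub a (sub a b) = sub b (sub b a))
    (h3 : ∀ a b c : A, sub (sub a b) c = sub (sub a c) b) (a b : A) :
    sle sub (sub a (sub a b)) b := by
  rw [h2 a b]
  exact sub_le h1 h2 h3 b (sub b a)

private lemma san (h2 : ∀ a b : A, sub a (sub a b) = sub b (sub b a)) {a b : A}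
    (hab : sle sub a b) (hba : sle sub b a) : a = b := by
  unfold sle at hab hba
  calc a = sub a (sub a b) := hab.symm
    _ = sub b (sub b a) := h2 a b
    _ = b := hba

private lemma z_le (h1 : ∀ a b : A, sub a (sub b a) = a)
    (h2 : ∀ a b : A, sub a (sub a b) = sub b (sub b a))
    (h3 : ∀ a b c : A, sub (sub a b) c = sub (sub a c) b) (e t : A) :
    sle sub (sub e e) t :=
  of_le h1 h2 h3 (szero_sub h1 h2 h3 e t)

private lemma le_z (h1 : ∀ a b : A, sub a (sub b a) = a)
    (h2 : ∀ a b : A, sub a (sub a b) = sub b (sub b a))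
    (h3 : ∀ a b c : A, sub (sub a b) c = sub (sub a c) b) {t e : A}
    (h : sle sub t (sub e e)) : t = sub e e := by
  have h' := le_to h1 h2 h3 t h
  rwa [ssub_zero h1 h2 h3 t e, sconst h1 h2 h3 t e] at h'

private lemma mono_left (h1 : ∀ a b : A, sub a (sub b a) = a)
    (h2 : ∀ a b : A, sub a (sub a b) = sub b (sub b a))
    (h3 : ∀ a b c : A, sub (sub a b) c = sub (sub a c) b) {a b : A} (c : A)
    (h : sle sub a b) : sle sub (sub a c) (sub b c) := by
  have ha : sub b (sub b a) = a := by rw [← h2 a b]; exact h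
  apply of_le h1 h2 h3 (c := b)
  calc sub (sub a c) (sub b c)
      = sub (sub (sub b (sub b a)) c) (sub b c) := by rw [ha]
    _ = sub (sub (sub b c) (sub b a)) (sub b c) := by rw [h3 b (sub b a) c]
    _ = sub (sub (sub b c) (sub b c)) (sub b a) := h3 (sub b c) (sub b a) (sub b c)
    _ = sub (sub b b) (sub b a) := by rw [sconst h1 h2 h3 (sub b c) b]
    _ = sub b b := szero_sub h1 h2 h3 b (sub b a)

private lemma anti_right (h1 : ∀ a b : A, sub a (sub b a) = a)
    (h2 : ∀ a b : A, sub a (sub a b) = sub b (sub b a))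
    (h3 : ∀ a b c : A, sub (sub a b) c = sub (sub a c) b) {c a : A} (w : A)
    (h : sle sub c a) : sle sub (sub w a) (sub w c) := by
  have hca : sub c a = sub c c := le_to h1 h2 h3 c h
  apply of_le h1 h2 h3 (c := c)
  calc sub (sub w a) (sub w c)
      = sub (sub w (sub w c)) a := h3 w a (sub w c)
    _ = sub (sub c (sub c w)) a := by rw [h2 w c]
    _ = sub (sub c a) (sub c w) := h3 c (sub c w) a
    _ = sub (sub c c) (sub c w) := by rw [hca]
    _ = sub c c := szero_sub h1 h2 h3 c (sub c w)

private lemma strans (h1 : ∀ a b : A, sub a (sub b a) = a)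
    (h2 : ∀ a b : A, sub a (sub a b) = sub b (sub b a))
    (h3 : ∀ a b c : A, sub (sub a b) c = sub (sub a c) b) {a b c : A}
    (hab : sle sub a b) (hbc : sle sub b c) : sle sub a c := by
  have k := le_to h1 h2 h3 (sub a c) (mono_left h1 h2 h3 c hab)
  have hbc' : sub b c = sub b b := le_to h1 h2 h3 b hbc
  rw [hbc', ssub_zero h1 h2 h3 (sub a c) b] at k
  exact of_le h1 h2 h3 k

private lemma sglb (h1 : ∀ a b : A, sub a (sub b a) = a)
    (h2 : ∀ a b : A, sub a (sub a b) = sub b (sub b a))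
    (h3 : ∀ a b c : A, sub (sub a b) c = sub (sub a c) b) {c a b : A}
    (hca : sle sub c a) (hcb : sle sub c b) : sle sub c (sub a (sub a b)) := by
  rw [h2 a b]
  have hc : sub b (sub b c) = c := by rw [← h2 c b]; exact hcb
  have key : sub b (sub b (sub b a)) = sub b a := by
    have k1 : sub (sub b a) b = sub b b := by
      rw [h3 b a b]; exact szero_sub h1 h2 h3 b a
    calc sub b (sub b (sub b a)) = sub (sub b a) (sub (sub b a) b) := h2 b (sub b a)
      _ = sub (sub b a) (sub b b) := by rw [k1]
      _ = sub b a := ssub_zero h1 h2 h3 (sub b a) b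
  have hlast : sub (sub b a) (sub b c) = sub (sub b a) (sub b a) :=
    le_to h1 h2 h3 (sub b a) (anti_right h1 h2 h3 b hca)
  apply of_le h1 h2 h3 (c := sub b a)
  calc sub c (sub b (sub b a))
      = sub (sub b (sub b c)) (sub b (sub b a)) := by rw [hc]
    _ = sub (sub b (sub b (sub b a))) (sub b c) := h3 b (sub b c) (sub b (sub b a))
    _ = sub (sub b a) (sub b c) := by rw [key]
    _ = sub (sub b a) (sub b a) := hlast

private lemma meet_mono_left (h1 : ∀ a b : A, sub a (sub b a) = a)
    (h2 : ∀ a b : A, sub a (sub a b) = sub b (sub b a))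
    (h3 : ∀ a b c : A, sub (sub a b) c = sub (sub a c) b) {c d : A} (b : A)
    (h : sle sub c d) : sle sub (sub c (sub c b)) (sub d (sub d b)) :=
  sglb h1 h2 h3 (strans h1 h2 h3 (meet_le_left h1 h2 h3 c b) h)
    (meet_le_right h1 h2 h3 c b)

private lemma sdisj (h1 : ∀ a b : A, sub a (sub b a) = a)
    (h2 : ∀ a b : A, sub a (sub a b) = sub b (sub b a))
    (h3 : ∀ a b c : A, sub (sub a b) c = sub (sub a c) b) {x b e : A}
    (h : sub x (sub x b) = sub e e) : sub x b = x := by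
  apply san h2 (sub_le h1 h2 h3 x b)
  show sub x (sub x (sub x b)) = x
  rw [h]
  exact ssub_zero h1 h2 h3 x e

end SubAlgAux

theorem stmt16 {A : Type*} (sub : A → A → A)
    (sax1 : ∀ a b : A, sub a (sub b a) = a)
    (sax2 : ∀ a b : A, sub a (sub a b) = sub b (sub b a))
    (sax3 : ∀ a b c : A, sub (sub a b) c = sub (sub a c) b)
    (F : Set A) (hF : IsFilter' sub F) :
    (IsMaxFilterS sub F ↔
      ∃ a ∈ F, ∀ b : A, Xor' (sub a (sub a b) ∈ F) (sub a b ∈ F)) ∧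
    (IsMaxFilterS sub F ↔
      ∀ a ∈ F, ∀ b : A, Xor' (sub a (sub a b) ∈ F) (sub a b ∈ F)) := by
  obtain ⟨e, heF⟩ := hF.1
  -- if the bottom element belongs to a filter, the filter is everything
  have zuniv : ∀ G : Set A, IsFilter' sub G → sub e e ∈ G → G = Set.univ := by
    intro G hG hzG
    apply Set.eq_univ_of_forall
    intro t
    exact hG.2.1 (sub e e) t hzG (z_le sax1 sax2 sax3 e t)
  have max_imp : IsMaxFilterS sub F →
      ∀ a ∈ F, ∀ b : A, Xor' (sub a (sub a b) ∈ F) (sub a b ∈ F) := by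
    intro hmax a haF b
    have hnotboth : ¬(sub a (sub a b) ∈ F ∧ sub a b ∈ F) := by
      rintro ⟨hm, hs⟩
      have hmeet := hF.2.2 _ _ hm hs
      rw [sg1 sax1 a (sub a b), sconst sax1 sax2 sax3 (sub a (sub a b)) e] at hmeet
      exact hmax.2.1 (zuniv F hF hmeet)
    by_cases hq : sub a b ∈ F
    · exact Or.inr ⟨hq, fun hp => hnotboth ⟨hp, hq⟩⟩
    · have hm : sub a (sub a b) ∈ F := by
        set G : Set A := {y | ∃ x, x ∈ F ∧ sle sub (sub x (sub x b)) y} with hGdef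
        have hGfil : IsFilter' sub G := by
          refine ⟨⟨a, a, haF, meet_le_left sax1 sax2 sax3 a b⟩, ?_, ?_⟩
          · rintro u v ⟨x, hxF, hle⟩ huv
            exact ⟨x, hxF, strans sax1 sax2 sax3 hle huv⟩
          · rintro u v ⟨x, hxF, hxu⟩ ⟨y, hyF, hyv⟩
            refine ⟨sub x (sub x y), hF.2.2 x y hxF hyF, ?_⟩
            have l1 : sle sub (sub (sub x (sub x y)) (sub (sub x (sub x y)) b)) u :=
              strans sax1 sax2 sax3
                (meet_mono_left sax1 sax2 sax3 b (meet_le_left sax1 sax2 sax3 x y)) hxu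
            have l2 : sle sub (sub (sub x (sub x y)) (sub (sub x (sub x y)) b)) v :=
              strans sax1 sax2 sax3
                (meet_mono_left sax1 sax2 sax3 b (meet_le_right sax1 sax2 sax3 x y)) hyv
            exact sglb sax1 sax2 sax3 l1 l2
        have hFG : F ⊆ G := fun x hx => ⟨x, hx, meet_le_left sax1 sax2 sax3 x b⟩
        by_cases hGu : G = Set.univ
        · exfalso
          have hzG : sub e e ∈ G := by rw [hGu]; trivial
          obtain ⟨x, hxF, hlex⟩ := hzG
          have hxz : sub x (sub x b) = sub e e := le_z sax1 sax2 sax3 hlex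
          have hcF : sub x (sub x a) ∈ F := hF.2.2 x a hxF haF
          have h5 : sle sub (sub (sub x (sub x a)) (sub (sub x (sub x a)) b)) (sub e e) := by
            have h5' := meet_mono_left sax1 sax2 sax3 b (meet_le_left sax1 sax2 sax3 x a)
            rwa [hxz] at h5'
          have h6 := le_z sax1 sax2 sax3 h5
          have h7 : sub (sub x (sub x a)) b = sub x (sub x a) := sdisj sax1 sax2 sax3 h6
          have h8 := mono_left sax1 sax2 sax3 b (meet_le_right sax1 sax2 sax3 x a)
          rw [h7] at h8
          exact hq (hF.2.1 _ (sub a b) hcF h8)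
        · have hGF : G = F := hmax.2.2 G hGfil hGu hFG
          have hbG : b ∈ G := ⟨a, haF, meet_le_right sax1 sax2 sax3 a b⟩
          rw [hGF] at hbG
          exact hF.2.2 a b haF hbG
      exact Or.inl ⟨hm, hq⟩
  have exists_imp : (∃ a ∈ F, ∀ b : A, Xor' (sub a (sub a b) ∈ F) (sub a b ∈ F)) →
      IsMaxFilterS sub F := by
    rintro ⟨a, haF, hx⟩
    have hzF : sub e e ∉ F := by
      intro hzF
      have h := hx (sub e e)
      have h1' : sub a (sub e e) = a := ssub_zero sax1 sax2 sax3 a e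
      have h2' : sub a (sub a (sub e e)) = sub e e := by
        rw [h1']; exact sconst sax1 sax2 sax3 a e
      rw [h2', h1'] at h
      rcases h with ⟨_, hna⟩ | ⟨_, hnz⟩
      · exact hna haF
      · exact hnz hzF
    refine ⟨hF, ?_, ?_⟩
    · intro huniv
      exact hzF (by rw [huniv]; trivial)
    · intro G hG hGu hFG
      refine Set.Subset.antisymm ?_ hFG
      intro t htG
      rcases hx t with ⟨hm, _⟩ | ⟨hs, _⟩
      · exact hF.2.1 _ t hm (meet_le_right sax1 sax2 sax3 a t)
      · exfalso
        have hmem := hG.2.2 _ _ (hFG hs) htG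
        rw [sg1 sax1 a t, sconst sax1 sax2 sax3 (sub a t) e] at hmem
        exact hGu (zuniv G hG hmem)
  constructor
  · exact ⟨fun h => ⟨e, heF, max_imp h e heF⟩, exists_imp⟩
  · exact ⟨max_imp, fun h => exists_imp ⟨e, heF, h e heF⟩⟩
end

section
/- Let A and B be subtraction algebras and h : A → B a homomorphism (preserving -). If h is meet complete (h sends any existing meet of a nonempty subset to a meet that exists in B), then h is join complete (h sends any existing join of any subset to a join that exists in B), and conversely. -/
/-- `x` is the infimum of `S` with respect to the induced order. -/
def isInfOf {A : Type*} (sub : A → A → A) (S : Set A) (x : A) : Prop :=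
  (∀ s ∈ S, sle sub x s) ∧ ∀ y, (∀ s ∈ S, sle sub y s) → sle sub y x

/-- `x` is the supremum of `S` with respect to the induced order. -/
def isSupOf {A : Type*} (sub : A → A → A) (S : Set A) (x : A) : Prop :=
  (∀ s ∈ S, sle sub s x) ∧ ∀ y, (∀ s ∈ S, sle sub s y) → sle sub x y

namespace SubAlgAux

section

variable {A : Type*} (sub : A → A → A)
variable (ax1 : ∀ a b : A, sub a (sub b a) = a)
variable (ax2 : ∀ a b : A, sub a (sub a b) = sub b (sub b a))
variable (ax3 : ∀ a b c : A, sub (sub a b) c = sub (sub a c) b)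

include ax1

lemma l1 (a : A) : sub a (sub a a) = a := ax1 a a

lemma lP1 (a b : A) : sub (sub a b) b = sub a b := by
  have e := ax1 (sub a b) b
  rwa [ax1 b a] at e

include ax2

lemma lI (a b : A) : sub (sub a b) (sub a b) = sub b b := by
  have e := ax2 (sub a b) b
  rwa [lP1 sub ax1, ax1 b a] at e

lemma lzz (a b : A) : sub a a = sub b b := by
  have e1 := lI sub ax1 ax2 b (sub b a)
  rw [lI sub ax1 ax2 b a] at e1
  rw [ax2 b a] at e1
  rw [lI sub ax1 ax2 a (sub a b)] at e1
  rw [lI sub ax1 ax2 a b] at e1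
  -- e1 : sub b b = sub a a
  exact e1.symm

lemma lsub_zero (a b : A) : sub a (sub b b) = a := by
  rw [lzz sub ax1 ax2 b a]; exact l1 sub ax1 a

include ax3

lemma lzero_sub (a b : A) : sub (sub a a) b = sub a a := by
  calc sub (sub a a) b = sub (sub (sub a b) (sub a b)) b := by
        rw [lI sub ax1 ax2 a b, lzz sub ax1 ax2 b a]
    _ = sub (sub (sub a b) b) (sub a b) := ax3 _ _ _
    _ = sub (sub a b) (sub a b) := by rw [lP1 sub ax1]
    _ = sub b b := lI sub ax1 ax2 a b
    _ = sub a a := lzz sub ax1 ax2 b a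

lemma le_iff {a b : A} : sle sub a b ↔ sub a b = sub a a := by
  constructor
  · intro hab
    calc sub a b = sub (sub a (sub a b)) b := by rw [hab]
      _ = sub (sub a b) (sub a b) := ax3 _ _ _
      _ = sub b b := lI sub ax1 ax2 a b
      _ = sub a a := lzz sub ax1 ax2 b a
  · intro e
    show sub a (sub a b) = a
    rw [e]; exact l1 sub ax1 a

lemma le_trans' {a b c : A} (hab : sle sub a b) (hbc : sle sub b c) : sle sub a c := by
  have ea : sub b (sub b a) = a := by
    rw [← ax2 a b]; exact hab
  rw [le_iff sub ax1 ax2 ax3] at hbc ⊢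
  calc sub a c = sub (sub b (sub b a)) c := by rw [ea]
    _ = sub (sub b c) (sub b a) := ax3 _ _ _
    _ = sub (sub b b) (sub b a) := by rw [hbc]
    _ = sub b b := lzero_sub sub ax1 ax2 ax3 b (sub b a)
    _ = sub a a := lzz sub ax1 ax2 b a

omit ax1 ax3 in
lemma le_antisymm' {a b : A} (hab : sle sub a b) (hba : sle sub b a) : a = b := by
  calc a = sub a (sub a b) := hab.symm
    _ = sub b (sub b a) := ax2 a b
    _ = b := hba

lemma lsub_le (a b : A) : sle sub (sub a b) a := by
  rw [le_iff sub ax1 ax2 ax3]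
  calc sub (sub a b) a = sub (sub a a) b := ax3 _ _ _
    _ = sub a a := lzero_sub sub ax1 ax2 ax3 a b
    _ = sub (sub a b) (sub a b) := lzz sub ax1 ax2 a (sub a b)

lemma lp4 (a b : A) : sle sub (sub a (sub a b)) b := by
  rw [le_iff sub ax1 ax2 ax3]
  calc sub (sub a (sub a b)) b = sub (sub a b) (sub a b) := ax3 _ _ _
    _ = sub (sub a (sub a b)) (sub a (sub a b)) := lzz sub ax1 ax2 _ _

lemma lantitone {b c : A} (a : A) (hbc : sle sub b c) : sle sub (sub a c) (sub a b) := by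
  rw [le_iff sub ax1 ax2 ax3] at hbc ⊢
  calc sub (sub a c) (sub a b) = sub (sub a (sub a b)) c := ax3 _ _ _
    _ = sub (sub b (sub b a)) c := by rw [ax2 a b]
    _ = sub (sub b c) (sub b a) := ax3 _ _ _
    _ = sub (sub b b) (sub b a) := by rw [hbc]
    _ = sub b b := lzero_sub sub ax1 ax2 ax3 b _
    _ = sub (sub a c) (sub a c) := lzz sub ax1 ax2 b _

lemma zero_le (c b : A) : sle sub (sub c c) b := by
  show sub (sub c c) (sub (sub c c) b) = sub c c
  rw [lzero_sub sub ax1 ax2 ax3]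

omit ax3 in
lemma le_zero_eq {a c : A} (h : sle sub a (sub c c)) : a = sub c c := by
  have e : sub a (sub a (sub c c)) = a := h
  rw [lsub_zero sub ax1 ax2 a c] at e
  calc a = sub a a := e.symm
    _ = sub c c := lzz sub ax1 ax2 a c

/-- If `x` bounds `S` above and `x - x` is the inf of `{x - s}`, then `x` is the sup of `S`. -/
lemma lemSUP (S : Set A) (x : A) (hub : ∀ s ∈ S, sle sub s x)
    (hinf : isInfOf sub ((fun s => sub x s) '' S) (sub x x)) : isSupOf sub S x := by
  refine ⟨hub, ?_⟩
  intro y hy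
  have hlb : ∀ t ∈ (fun s => sub x s) '' S, sle sub (sub x y) t := by
    rintro t ⟨s, hs, rfl⟩
    exact lantitone sub ax1 ax2 ax3 x (hy s hs)
  have h0 : sle sub (sub x y) (sub x x) := hinf.2 _ hlb
  have e : sub x y = sub x x := le_zero_eq sub ax1 ax2 h0
  show sub x (sub x y) = x
  rw [e]; exact l1 sub ax1 x

/-- If `x` bounds `S` below, `s0 ∈ S`, and `s0 - x` is the sup of `{s0 - s}`,
then `x` is the inf of `S`. -/
lemma lemINF (S : Set A) (x : A) (s0 : A) (hs0 : s0 ∈ S)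
    (hlb : ∀ s ∈ S, sle sub x s)
    (hsup : isSupOf sub ((fun s => sub s0 s) '' S) (sub s0 x)) : isInfOf sub S x := by
  refine ⟨hlb, ?_⟩
  intro y hy
  have hub : ∀ t ∈ (fun s => sub s0 s) '' S, sle sub t (sub s0 y) := by
    rintro t ⟨s, hs, rfl⟩
    exact lantitone sub ax1 ax2 ax3 s0 (hy s hs)
  have h1 : sle sub (sub s0 x) (sub s0 y) := hsup.2 _ hub
  have h2 : sle sub (sub s0 (sub s0 y)) (sub s0 (sub s0 x)) :=
    lantitone sub ax1 ax2 ax3 s0 h1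
  have e1 : y = sub s0 (sub s0 y) := by
    have e := ax2 y s0
    rw [hy s0 hs0] at e
    exact e
  have e2 : x = sub s0 (sub s0 x) := by
    have e := ax2 x s0
    rw [hlb s0 hs0] at e
    exact e
  rw [e1, e2]
  exact h2

/-- If `x` is the sup of a nonempty `S`, then `x - x` is the inf of `{x - s}`. -/
lemma claimA (S : Set A) (x : A) (s0 : A) (hs0 : s0 ∈ S) (hS : isSupOf sub S x) :
    isInfOf sub ((fun s => sub x s) '' S) (sub x x) := by
  constructor
  · rintro t ⟨s, hs, rfl⟩
    exact zero_le sub ax1 ax2 ax3 x (sub x s)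
  · intro z hz
    have hub : ∀ s ∈ S, sle sub s (sub x z) := by
      intro s hs
      have h1 : sle sub (sub x (sub x z)) z := lp4 sub ax1 ax2 ax3 x z
      have h2 : sle sub (sub x (sub x z)) (sub x s) :=
        le_trans' sub ax1 ax2 ax3 h1 (hz _ ⟨s, hs, rfl⟩)
      have hsx : sle sub s x := hS.1 s hs
      have e : sub x (sub x s) = s := by
        have e' := ax2 s x
        rw [hsx] at e'
        exact e'.symm
      rw [le_iff sub ax1 ax2 ax3]
      calc sub s (sub x z) = sub (sub x (sub x s)) (sub x z) := by rw [e]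
        _ = sub (sub x (sub x z)) (sub x s) := ax3 _ _ _
        _ = sub (sub x (sub x z)) (sub x (sub x z)) := (le_iff sub ax1 ax2 ax3).mp h2
        _ = sub s s := lzz sub ax1 ax2 _ _
    have h3 : sle sub x (sub x z) := hS.2 _ hub
    have h4 : sle sub (sub x z) x := lsub_le sub ax1 ax2 ax3 x z
    have h5 : sub x z = x := le_antisymm' sub ax2 h4 h3
    have hzx : sle sub z x :=
      le_trans' sub ax1 ax2 ax3 (hz _ ⟨s0, hs0, rfl⟩) (lsub_le sub ax1 ax2 ax3 x s0)
    have e2 := ax2 z x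
    rw [hzx] at e2
    rw [h5] at e2
    rw [e2]
    exact l1 sub ax1 (sub x x)

/-- If `x` is the inf of `S` and `s0 ∈ S`, then `s0 - x` is the sup of `{s0 - s}`. -/
lemma claimB (S : Set A) (x : A) (s0 : A) (_hs0 : s0 ∈ S) (hS : isInfOf sub S x) :
    isSupOf sub ((fun s => sub s0 s) '' S) (sub s0 x) := by
  constructor
  · rintro t ⟨s, hs, rfl⟩
    exact lantitone sub ax1 ax2 ax3 s0 (hS.1 s hs)
  · intro y hy
    have hlb : ∀ s ∈ S, sle sub (sub s0 y) s := by
      intro s hs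
      have h1 : sle sub (sub s0 y) (sub s0 (sub s0 s)) :=
        lantitone sub ax1 ax2 ax3 s0 (hy _ ⟨s, hs, rfl⟩)
      exact le_trans' sub ax1 ax2 ax3 h1 (lp4 sub ax1 ax2 ax3 s0 s)
    have h2 : sle sub (sub s0 y) x := hS.2 _ hlb
    have h3 : sle sub (sub s0 x) (sub s0 (sub s0 y)) :=
      lantitone sub ax1 ax2 ax3 s0 h2
    exact le_trans' sub ax1 ax2 ax3 h3 (lp4 sub ax1 ax2 ax3 s0 y)

end

end SubAlgAux

open SubAlgAux in
theorem stmt18 {A B : Type*} (subA : A → A → A) (subB : B → B → B)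
    (axA1 : ∀ a b : A, subA a (subA b a) = a)
    (axA2 : ∀ a b : A, subA a (subA a b) = subA b (subA b a))
    (axA3 : ∀ a b c : A, subA (subA a b) c = subA (subA a c) b)
    (axB1 : ∀ a b : B, subB a (subB b a) = a)
    (axB2 : ∀ a b : B, subB a (subB a b) = subB b (subB b a))
    (axB3 : ∀ a b c : B, subB (subB a b) c = subB (subB a c) b)
    (h : A → B) (hhom : ∀ a b : A, h (subA a b) = subB (h a) (h b)) :
    (∀ (S : Set A) (x : A), S.Nonempty → isInfOf subA S x → isInfOf subB (h '' S) (h x)) ↔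
      (∀ (S : Set A) (x : A), isSupOf subA S x → isSupOf subB (h '' S) (h x)) := by
  have hmono : ∀ {a b : A}, sle subA a b → sle subB (h a) (h b) := by
    intro a b hab
    show subB (h a) (subB (h a) (h b)) = h a
    rw [← hhom, ← hhom, hab]
  have himg : ∀ (c : A) (S : Set A),
      h '' ((fun s => subA c s) '' S) = (fun b => subB (h c) b) '' (h '' S) := by
    intro c S
    rw [Set.image_image, Set.image_image]
    exact Set.image_congr' (fun s => hhom c s)
  constructor
  · intro hmeet S x hsup
    by_cases hS : S.Nonempty
    · obtain ⟨s0, hs0⟩ := hS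
      have hA := claimA subA axA1 axA2 axA3 S x s0 hs0 hsup
      have hB := hmeet ((fun s => subA x s) '' S) (subA x x) ⟨subA x s0, ⟨s0, hs0, rfl⟩⟩ hA
      rw [himg, hhom] at hB
      exact lemSUP subB axB1 axB2 axB3 (h '' S) (h x)
        (by rintro b ⟨s, hs, rfl⟩; exact hmono (hsup.1 s hs)) hB
    · rw [Set.not_nonempty_iff_eq_empty] at hS; subst hS
      have hleast : ∀ a : A, sle subA x a := fun a => hsup.2 a (by simp)
      have hx0 : x = subA x x := le_zero_eq subA axA1 axA2 (hleast (subA x x))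
      constructor
      · rintro b ⟨s, hs, rfl⟩; simp at hs
      · intro y _
        have e : h x = subB (h x) (h x) := by
          conv_lhs => rw [hx0, hhom]
        rw [e]
        exact zero_le subB axB1 axB2 axB3 (h x) y
  · intro hjoin S x hne hinf
    obtain ⟨s0, hs0⟩ := hne
    have hA := claimB subA axA1 axA2 axA3 S x s0 hs0 hinf
    have hB := hjoin _ _ hA
    rw [himg, hhom] at hB
    exact lemINF subB axB1 axB2 axB3 (h '' S) (h x) (h s0) ⟨s0, hs0, rfl⟩
      (by rintro b ⟨s, hs, rfl⟩; exact hmono (hinf.1 s hs)) hB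
end

section
/- In an atomic representable algebra A satisfying (Ax1)–(Ax5), the map θ sending a to {(x,y) : x, y atoms of A, x ∼ y, y ≤ a} is an injective homomorphism of {-, ▷}-algebras into the algebra of partial functions on the set of atoms of A (with relative complement and domain restriction), i.e., each θ(a) is a partial function, θ(a - b) = θ(a) - θ(b), and θ(a ▷ b) = θ(a) ▷ θ(b). -/
/-- `x` is an atom: a minimal nonzero element (`z` is the zero). -/
def isAtomS {A : Type*} (sub : A → A → A) (z x : A) : Prop :=
  x ≠ z ∧ ∀ b, sle sub b x → b = z ∨ b = x

/-- The atomic representation `θ(a) = {(x,y) : x, y atoms, x ∼ y, y ≤ a}`. -/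
def theta {A : Type*} (sub rest : A → A → A) (z a : A) : Set (A × A) :=
  {p | isAtomS sub z p.1 ∧ isAtomS sub z p.2 ∧ seqv rest p.1 p.2 ∧ sle sub p.2 a}

/-!
Reading `a ≤ b` as `sub a b = z`, axioms (Ax1)–(Ax3) make `≤` a partial order whose meet is `a·b`, and
(Ax4)–(Ax5) give `a ▷ b ≤ b`, `a ▷ (a ▷ b) = a ▷ b` and transitivity of `≼`. An atom lies below
`a - b` iff it lies below `a` but not below `b`, which is `θ(a - b) = θ a \ θ b`; injectivity then
follows by applying atomicity to `a - b`. Two `∼`-equivalent elements below a common `a` coincide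
by (Ax4), so each `θ a` is a partial function. For `θ(a ▷ b)`, the point is that if `y ≠ 0` and
`y ≼ a` then `y ▷ a ≠ 0`, so an atom `y' ≤ y ▷ a` exists, and `y' ∼ y` with `y' ≤ a`.
-/

structure IsSubtractionAlgebra {A : Type*} (sub : A → A → A) (z : A) : Prop where
  sub_sub_eq_self : ∀ a b, sub a (sub b a) = a
  meet_comm : ∀ a b, sub a (sub a b) = sub b (sub b a)
  sub_sub_comm : ∀ a b c, sub (sub a b) c = sub (sub a c) b
  sub_self : ∀ a, sub a a = z

structure IsRestrictionAlgebra {A : Type*} (sub rest : A → A → A) (z : A) : Prop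
    extends IsSubtractionAlgebra sub z where
  meet_rest_rest : ∀ a b c,
    sub (rest a c) (sub (rest a c) (rest b c)) = rest (rest a b) c
  rest_meet_self : ∀ a b, rest (sub a (sub a b)) a = sub a (sub a b)

namespace IsSubtractionAlgebra

variable {A : Type*} {sub : A → A → A} {z : A} (H : IsSubtractionAlgebra sub z)
include H

theorem sub_zero (a : A) : sub a z = a := by
  simpa only [H.sub_self] using H.sub_sub_eq_self a a

theorem zero_sub (a : A) : sub z a = z := by
  simpa only [H.sub_zero] using H.sub_sub_eq_self z a

theorem sle_iff {a b : A} : sle sub a b ↔ sub a b = z := by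
  refine ⟨fun h => ?_, fun h => by rw [sle, h, H.sub_zero]⟩
  rw [← h, H.sub_sub_comm, H.sub_self]

theorem sub_sub_self (a b : A) : sub (sub a b) a = z := by
  rw [H.sub_sub_comm, H.sub_self, H.zero_sub]

theorem meet_sub_right (a b : A) : sub (sub a (sub a b)) b = z := by
  rw [H.sub_sub_comm, H.sub_self]

theorem meet_eq_left_of_le {a b : A} (h : sub a b = z) : sub a (sub a b) = a := by
  rw [h, H.sub_zero]

theorem meet_eq_right_of_le {a b : A} (h : sub a b = z) : sub b (sub b a) = a := by
  rw [← H.meet_comm, H.meet_eq_left_of_le h]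

theorem le_of_meet_eq {a b : A} (h : sub a (sub a b) = b) : sub b a = z := by
  rw [← h, H.sub_sub_self]

theorem le_trans {a b c : A} (hab : sub a b = z) (hbc : sub b c = z) : sub a c = z := by
  rw [← H.meet_eq_right_of_le hab, H.sub_sub_comm, hbc, H.zero_sub]

theorem le_antisymm {a b : A} (hab : sub a b = z) (hba : sub b a = z) : a = b := by
  rw [← H.meet_eq_left_of_le hab, H.meet_comm, H.meet_eq_left_of_le hba]

theorem sub_idem (a b : A) : sub (sub a b) b = sub a b := by
  simpa only [H.sub_sub_eq_self b a] using H.sub_sub_eq_self (sub a b) b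

theorem sub_le_sub_right {a b : A} (c : A) (h : sub a b = z) :
    sub (sub a c) (sub b c) = z := by
  rw [← H.meet_eq_right_of_le h, H.sub_sub_comm b, H.sub_sub_self]

theorem sub_sub_sub_le_sub (a b c : A) : sub (sub (sub a c) (sub b c)) (sub a b) = z := by
  rw [H.sub_sub_comm, ← H.sub_sub_comm a, H.meet_comm]
  exact H.sub_le_sub_right c (H.sub_sub_self b (sub b a))

theorem sub_eq_self_of_le_sub {x a b : A} (h : sub x (sub a b) = z) : sub x b = x := by
  rw [← H.meet_eq_right_of_le h, H.sub_sub_comm, H.sub_idem]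

theorem eq_zero_of_le_sub_of_le {x a b : A} (hxab : sub x (sub a b) = z) (hxb : sub x b = z) :
    x = z := by
  rw [← H.sub_eq_self_of_le_sub hxab, hxb]

theorem sub_eq_zero_or_eq_of_isAtomS {y : A} (hy : isAtomS sub z y) (b : A) :
    sub y b = z ∨ sub y b = y :=
  hy.2 _ (H.sle_iff.2 (H.sub_sub_self y b))

theorem isAtomS_le_sub_iff {y : A} (hy : isAtomS sub z y) (a b : A) :
    sub y (sub a b) = z ↔ sub y a = z ∧ sub y b ≠ z := by
  refine ⟨fun h => ⟨H.le_trans h (H.sub_sub_self a b),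
    fun hb => hy.1 (H.eq_zero_of_le_sub_of_le h hb)⟩, fun ⟨ha, hb⟩ => ?_⟩
  have key := H.sub_sub_sub_le_sub y a b
  rwa [(H.sub_eq_zero_or_eq_of_isAtomS hy b).resolve_left hb, ha, H.sub_zero] at key

end IsSubtractionAlgebra

namespace IsRestrictionAlgebra

variable {A : Type*} {sub rest : A → A → A} {z : A} (H : IsRestrictionAlgebra sub rest z)
include H

theorem rest_self (a : A) : rest a a = a := by
  simpa only [H.sub_self, H.sub_zero] using H.rest_meet_self a a

theorem rest_eq_left_of_le {u a : A} (h : sub u a = z) : rest u a = u := by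
  simpa only [H.meet_eq_right_of_le h] using H.rest_meet_self a u

theorem rest_zero_left (b : A) : rest z b = z :=
  H.rest_eq_left_of_le (H.zero_sub b)

theorem rest_le (a b : A) : sub (rest a b) b = z := by
  generalize hs : rest a b = s
  have hs_le : sub s (rest b s) = z := by
    have h := H.meet_rest_rest a b s
    rw [hs, H.rest_self] at h
    simpa only [h] using H.meet_sub_right (rest a s) (rest b s)
  have h_meet : sub s (sub s b) = rest s b := by
    simpa only [hs, H.rest_self] using H.meet_rest_rest a b b
  have h_left : rest (rest s b) s = s := by
    simpa only [H.rest_self, H.meet_eq_left_of_le hs_le] using (H.meet_rest_rest s b s).symm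
  have h_right : rest (rest s b) s = rest s b := by
    simpa only [h_meet] using H.rest_meet_self s b
  rw [← H.sle_iff, sle, h_meet, ← h_right, h_left]

theorem rest_eq_of_meet_eq {a c w : A} (h : sub (rest c a) (sub (rest c a) w) = a) :
    rest c a = a :=
  H.le_antisymm (H.rest_le c a) (by simpa only [h] using H.sub_sub_self (rest c a) (sub (rest c a) w))

theorem rest_rest_left (a b : A) : rest a (rest a b) = rest a b :=
  H.rest_eq_of_meet_eq (by simpa only [H.rest_self] using H.meet_rest_rest a b (rest a b))

theorem rest_trans {a b c : A} (hab : rest b a = a) (hbc : rest c b = b) : rest c a = a :=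
  H.rest_eq_of_meet_eq (w := rest b a) (by rw [H.meet_rest_rest, hbc, hab])

theorem rest_eq_right_of_le {u v : A} (h : sub u v = z) : rest v u = u := by
  refine H.rest_eq_of_meet_eq (w := u) ?_
  rw [H.meet_comm]
  simpa only [H.rest_self, H.rest_eq_left_of_le h] using H.meet_rest_rest u v u

theorem rest_ne_zero_of_rest_eq {a y : A} (h : rest a y = y) (hy : y ≠ z) : rest y a ≠ z := by
  intro hya
  have key := H.meet_rest_rest y a y
  rw [H.rest_self, h, hya, H.rest_zero_left, H.sub_self, H.sub_zero] at key
  exact hy key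

theorem rest_eq_of_isAtomS {y w : A} (hy : isAtomS sub z y) (hw : w ≠ z) (h : rest y w = w) :
    rest w y = y :=
  (hy.2 _ (H.sle_iff.2 (H.rest_le w y))).resolve_left (H.rest_ne_zero_of_rest_eq h hw)

theorem le_rest_of_rest_eq_of_le {a b y : A} (h : rest a y = y) (hy : sub y b = z) :
    sub y (rest a b) = z :=
  H.le_of_meet_eq (by simpa only [h, H.rest_eq_left_of_le hy] using H.meet_rest_rest a y b)

theorem seqv_trans {x y w : A} (hxy : seqv rest x y) (hyw : seqv rest y w) : seqv rest x w :=
  ⟨H.rest_trans hxy.1 hyw.1, H.rest_trans hyw.2 hxy.2⟩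

theorem eq_of_seqv_of_le {u v a : A} (h : seqv rest u v) (hu : sub u a = z) (hv : sub v a = z) :
    u = v := by
  have meet_eq {u v : A} (huv : rest u v = v) (hu : sub u a = z) (hv : sub v a = z) :
      sub u (sub u v) = v := by
    simpa only [H.rest_eq_left_of_le hu, H.rest_eq_left_of_le hv, huv] using H.meet_rest_rest u v a
  rw [← meet_eq h.1 hv hu, H.meet_comm, meet_eq h.2 hu hv]

end IsRestrictionAlgebra

theorem IsSubtractionAlgebra.theta_sub {A : Type*} {sub rest : A → A → A} {z : A}
    (H : IsSubtractionAlgebra sub z) (a b : A) :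
    theta sub rest z (sub a b) = theta sub rest z a \ theta sub rest z b := by
  ext ⟨x, y⟩
  simp only [theta, Set.mem_sdiff, Set.mem_ofPred_eq, H.sle_iff]
  constructor
  · rintro ⟨hx, hy, hq, hyab⟩
    obtain ⟨hya, hyb⟩ := (H.isAtomS_le_sub_iff hy a b).1 hyab
    exact ⟨⟨hx, hy, hq, hya⟩, fun h => hyb h.2.2.2⟩
  · rintro ⟨⟨hx, hy, hq, hya⟩, hnb⟩
    exact ⟨hx, hy, hq, (H.isAtomS_le_sub_iff hy a b).2 ⟨hya, fun hyb => hnb ⟨hx, hy, hq, hyb⟩⟩⟩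

namespace IsRestrictionAlgebra

variable {A : Type*} {sub rest : A → A → A} {z : A} (H : IsRestrictionAlgebra sub rest z)
include H

theorem theta_isPFun (a : A) : IsPFun (theta sub rest z a) := by
  rintro x y₁ y₂ ⟨-, -, hxy₁, hy₁a⟩ ⟨-, -, hxy₂, hy₂a⟩
  exact H.eq_of_seqv_of_le (H.seqv_trans ⟨hxy₁.2, hxy₁.1⟩ hxy₂) (H.sle_iff.1 hy₁a)
    (H.sle_iff.1 hy₂a)

theorem exists_isAtomS_seqv_le_of_le_rest
    (atomic : ∀ a : A, a ≠ z → ∃ x, isAtomS sub z x ∧ sle sub x a)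
    {a b y : A} (hy : isAtomS sub z y) (hyab : sub y (rest a b) = z) :
    ∃ y', isAtomS sub z y' ∧ seqv rest y y' ∧ sub y' a = z := by
  have hay : rest a y = y := H.rest_trans (H.rest_eq_right_of_le hyab) (H.rest_rest_left a b)
  obtain ⟨y', hy', hy'ya⟩ := atomic _ (H.rest_ne_zero_of_rest_eq hay hy.1)
  rw [H.sle_iff] at hy'ya
  have hyy' : rest y y' = y' := H.rest_trans (H.rest_eq_right_of_le hy'ya) (H.rest_rest_left y a)
  exact ⟨y', hy', ⟨H.rest_eq_of_isAtomS hy hy'.1 hyy', hyy'⟩, H.le_trans hy'ya (H.rest_le y a)⟩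

theorem theta_rest (atomic : ∀ a : A, a ≠ z → ∃ x, isAtomS sub z x ∧ sle sub x a) (a b : A) :
    theta sub rest z (rest a b) = restr (theta sub rest z a) (theta sub rest z b) := by
  ext ⟨x, y⟩
  simp only [theta, restr, Set.mem_ofPred_eq, H.sle_iff]
  constructor
  · rintro ⟨hx, hy, hxy, hyab⟩
    obtain ⟨y', hy', hyy', hy'a⟩ := H.exists_isAtomS_seqv_le_of_le_rest atomic hy hyab
    exact ⟨⟨y', hx, hy', H.seqv_trans hxy hyy', hy'a⟩, hx, hy, hxy, H.le_trans hyab (H.rest_le a b)⟩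
  · rintro ⟨⟨y', -, -, hxy', hy'a⟩, hx, hy, hxy, hyb⟩
    have hay : rest a y = y :=
      H.rest_trans (H.seqv_trans ⟨hxy'.2, hxy'.1⟩ hxy).2 (H.rest_eq_right_of_le hy'a)
    exact ⟨hx, hy, hxy, H.le_rest_of_rest_eq_of_le hay hyb⟩

theorem theta_injective (atomic : ∀ a : A, a ≠ z → ∃ x, isAtomS sub z x ∧ sle sub x a) :
    Function.Injective (theta sub rest z) := by
  have le_of_theta_eq {u v : A} (huv : theta sub rest z u = theta sub rest z v) : sub u v = z := by
    by_contra hne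
    obtain ⟨y, hy, hyuv⟩ := atomic _ hne
    have hmem : (y, y) ∈ theta sub rest z (sub u v) :=
      ⟨hy, hy, ⟨H.rest_self y, H.rest_self y⟩, hyuv⟩
    rwa [H.theta_sub, huv, Set.sdiff_self] at hmem
  exact fun u v huv => H.le_antisymm (le_of_theta_eq huv) (le_of_theta_eq huv.symm)

end IsRestrictionAlgebra

theorem stmt19 {A : Type*} (sub rest : A → A → A)
    (ax1 : ∀ a b : A, sub a (sub b a) = a)
    (ax2 : ∀ a b : A, sub a (sub a b) = sub b (sub b a))
    (ax3 : ∀ a b c : A, sub (sub a b) c = sub (sub a c) b)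
    (ax4 : ∀ a b c : A, sub (rest a c) (sub (rest a c) (rest b c)) = rest (rest a b) c)
    (ax5 : ∀ a b : A, rest (sub a (sub a b)) a = sub a (sub a b))
    (z : A) (hz : ∀ a : A, sub a a = z)
    (atomic : ∀ a : A, a ≠ z → ∃ x, isAtomS sub z x ∧ sle sub x a) :
    (∀ a : A, IsPFun (theta sub rest z a)) ∧
    (∀ a b : A, theta sub rest z (sub a b) = theta sub rest z a \ theta sub rest z b) ∧
    (∀ a b : A, theta sub rest z (rest a b) = restr (theta sub rest z a) (theta sub rest z b)) ∧
    Function.Injective (theta sub rest z) := by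
  have H : IsRestrictionAlgebra sub rest z := ⟨⟨ax1, ax2, ax3, hz⟩, ax4, ax5⟩
  exact ⟨H.theta_isPFun, H.theta_sub, H.theta_rest atomic, H.theta_injective atomic⟩
end
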